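/- arXiv:2602.03500 — 2 statements merged into one kernel-verified Lean document; each statement's English description precedes it below -/
import Mathlib

section
/- Let n, m ≥ 1 and let f : ℝ → TP^m be a non-constant n-th tropical holomorphic curve with a reduced representation (f_0,…,f_m). Then for all i, l ∈ {0,…,m}, T(r, f_i ⊘ f_l) ≤ T_f(r) + O(1) as r → ∞, where f_i ⊘ f_l = f_i − f_l. -/
open Filter MeasureTheory Asymptotics Polynomial
open scoped Classical

noncomputable section

namespace Trop

/-- sign from the right: `sgn(x⁺)` (equal to `sgn x` for `x ≠ 0`, and `+1` at `0`). -/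
def sgnR (x : ℝ) : ℝ := if x < 0 then -1 else 1

/-- sign from the left: `sgn(x⁻)` (equal to `sgn x` for `x ≠ 0`, and `-1` at `0`). -/
def sgnL (x : ℝ) : ℝ := if 0 < x then 1 else -1

/-- `p` is the polynomial piece of `f` immediately to the right of `x`. -/
def IsRightPiece (f : ℝ → ℝ) (x : ℝ) (p : Polynomial ℝ) : Prop :=
  ∃ ε > (0 : ℝ), ∀ y ∈ Set.Ico x (x + ε), f y = p.eval y

/-- `p` is the polynomial piece of `f` immediately to the left of `x`. -/
def IsLeftPiece (f : ℝ → ℝ) (x : ℝ) (p : Polynomial ℝ) : Prop :=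
  ∃ ε > (0 : ℝ), ∀ y ∈ Set.Ioc (x - ε) x, f y = p.eval y

/-- The right polynomial piece of `f` at `x` (junk value `0` if none exists). -/
def rightPoly (f : ℝ → ℝ) (x : ℝ) : Polynomial ℝ :=
  if h : ∃ p, IsRightPiece f x p then h.choose else 0

/-- The left polynomial piece of `f` at `x` (junk value `0` if none exists). -/
def leftPoly (f : ℝ → ℝ) (x : ℝ) : Polynomial ℝ :=
  if h : ∃ p, IsLeftPiece f x p then h.choose else 0

/-- The one-sided `j`-th derivative `f^{(j)}(x⁺)` from the right. -/
def rderiv (f : ℝ → ℝ) (j : ℕ) (x : ℝ) : ℝ :=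
  ((fun q : Polynomial ℝ => Polynomial.derivative q)^[j] (rightPoly f x)).eval x

/-- The one-sided `j`-th derivative `f^{(j)}(x⁻)` from the left. -/
def lderiv (f : ℝ → ℝ) (j : ℕ) (x : ℝ) : ℝ :=
  ((fun q : Polynomial ℝ => Polynomial.derivative q)^[j] (leftPoly f x)).eval x

/-- `ω_f^{(j)}(x) = (sgn^{j+1}(x⁺) f^{(j)}(x⁺) − sgn^{j+1}(x⁻) f^{(j)}(x⁻))/j!`. -/
def omega (f : ℝ → ℝ) (j : ℕ) (x : ℝ) : ℝ :=
  (sgnR x ^ (j + 1) * rderiv f j x - sgnL x ^ (j + 1) * lderiv f j x) / (Nat.factorial j : ℝ)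

/-- `τ_f^{(j)}(x) = (f^{(j)}(x⁺) − f^{(j)}(x⁻))/j!`. -/
def tau (f : ℝ → ℝ) (j : ℕ) (x : ℝ) : ℝ :=
  (rderiv f j x - lderiv f j x) / (Nat.factorial j : ℝ)

/-- A continuous piecewise polynomial function: there is a strictly increasing doubly infinite
sequence of breakpoints with no finite accumulation point, on each segment `f` agrees with a
polynomial of degree at most `n`, and the supremum of the degrees of the pieces equals `n`. -/
def IsNthPiecewisePoly (n : ℕ) (f : ℝ → ℝ) : Prop :=
  Continuous f ∧
  ∃ (x : ℤ → ℝ) (p : ℤ → Polynomial ℝ),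
    StrictMono x ∧
    Tendsto x atTop atTop ∧ Tendsto x atBot atBot ∧
    (∀ i : ℤ, ∀ y ∈ Set.Icc (x (i - 1)) (x i), f y = (p i).eval y) ∧
    (∀ i : ℤ, (p i).natDegree ≤ n) ∧
    (∃ i : ℤ, (p i).natDegree = n)

/-- `f` has no `j`-th poles for any `j ≥ 1`. -/
def NoPoles (f : ℝ → ℝ) : Prop := ∀ j : ℕ, 1 ≤ j → ∀ x : ℝ, 0 ≤ omega f j x

/-- `f` has no `j`-th roots for any `j ≥ 1`. -/
def NoRoots (f : ℝ → ℝ) : Prop := ∀ j : ℕ, 1 ≤ j → ∀ x : ℝ, omega f j x ≤ 0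

/-- An `n`-th tropical meromorphic function. -/
def IsTropicalMeromorphic (n : ℕ) (f : ℝ → ℝ) : Prop :=
  IsNthPiecewisePoly n f ∧ ¬ ∃ c : ℝ, ∀ x : ℝ, f x = c

/-- An `n`-th tropical entire function (no poles; constants allowed when `n = 0`). -/
def IsTropicalEntire (n : ℕ) (f : ℝ → ℝ) : Prop :=
  IsNthPiecewisePoly n f ∧ NoPoles f

/-- The `n`-th max-plus proximity function `m(r, f)`. -/
def mProx (r : ℝ) (f : ℝ → ℝ) : ℝ := (max (f r) 0 + max (f (-r)) 0) / 2

/-- The `j`-th integrated max-plus counting function of poles,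
`N^{(j)}(r, f) = (1/2) Σ_z |ω_f^{(j)}(z)| (r − |z|)^j` over the `j`-th poles `z` in `(−r, r)`. -/
def Npole (j : ℕ) (r : ℝ) (f : ℝ → ℝ) : ℝ :=
  (1 / 2) * ∑' z : {z : ℝ // z ∈ Set.Ioo (-r) r ∧ omega f j z < 0},
    |omega f j z.1| * (r - |z.1|) ^ j

/-- The `j`-th integrated counting function of roots, `N^{(j)}(r, 1₀ ⊘ f)`. -/
def Nroot (j : ℕ) (r : ℝ) (f : ℝ → ℝ) : ℝ :=
  (1 / 2) * ∑' z : {z : ℝ // z ∈ Set.Ioo (-r) r ∧ 0 < omega f j z},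
    |omega f j z.1| * (r - |z.1|) ^ j

/-- Partial pole-counting function restricted to a set `I`. -/
def NpoleIn (j : ℕ) (r : ℝ) (I : Set ℝ) (f : ℝ → ℝ) : ℝ :=
  (1 / 2) * ∑' z : {z : ℝ // z ∈ I ∧ omega f j z < 0},
    |omega f j z.1| * (r - |z.1|) ^ j

/-- Partial root-counting function restricted to a set `I`. -/
def NrootIn (j : ℕ) (r : ℝ) (I : Set ℝ) (f : ℝ → ℝ) : ℝ :=
  (1 / 2) * ∑' z : {z : ℝ // z ∈ I ∧ 0 < omega f j z},
    |omega f j z.1| * (r - |z.1|) ^ j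

/-- The `n`-th max-plus characteristic function `T(r, f)`. -/
def Tchar (n : ℕ) (r : ℝ) (f : ℝ → ℝ) : ℝ :=
  mProx r f + ∑ j ∈ Finset.Icc 1 n, Npole j r f

/-- The hyper-order `ρ₂(f) = limsup_{r→∞} log log T(r,f) / log r`. -/
def hyperOrder (n : ℕ) (f : ℝ → ℝ) : ℝ :=
  Filter.limsup (fun r : ℝ => Real.log (Real.log (Tchar n r f)) / Real.log r) Filter.atTop

/-- `E ⊆ (1, ∞)` has finite logarithmic measure: `∫_E dt/t < ∞`. -/
def FiniteLogMeasure (E : Set ℝ) : Prop :=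
  E ⊆ Set.Ioi 1 ∧ (∫⁻ t in E, ENNReal.ofReal (1 / t)) < ⊤

/-- A well defined polynomial: apart from the constant term, only the coefficients whose index
has the same parity as the degree survive, and they all have the same sign. -/
def WellDefinedPoly (p : Polynomial ℝ) : Prop :=
  (∀ k : ℕ, 1 ≤ k → k % 2 ≠ p.natDegree % 2 → p.coeff k = 0) ∧
  ((∀ k : ℕ, 1 ≤ k → 0 ≤ p.coeff k) ∨ (∀ k : ℕ, 1 ≤ k → p.coeff k ≤ 0))

/-- A piecewise polynomial function is well defined if all its polynomial pieces are. -/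
def WellDefinedFn (f : ℝ → ℝ) : Prop :=
  ∀ x : ℝ, WellDefinedPoly (rightPoly f x) ∧ WellDefinedPoly (leftPoly f x)

/-- The pointwise maximum of the components of a representation of a tropical holomorphic curve. -/
def Fmax {m : ℕ} (f : Fin (m + 1) → ℝ → ℝ) (x : ℝ) : ℝ := ⨆ i, f i x

/-- The tropical Cartan characteristic function of the curve represented by `f`. -/
def TCartan {m : ℕ} (f : Fin (m + 1) → ℝ → ℝ) (r : ℝ) : ℝ :=
  (Fmax f r + Fmax f (-r)) / 2 - Fmax f 0

/-- `f` is a representation of an `n`-th tropical holomorphic curve `ℝ → TP^m`: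
each component is an `n_i`-th tropical entire function and `max_i n_i = n`. -/
def IsHoloCurveRep (n : ℕ) {m : ℕ} (f : Fin (m + 1) → ℝ → ℝ) : Prop :=
  ∃ d : Fin (m + 1) → ℕ, (∀ i, IsTropicalEntire (d i) (f i)) ∧ Finset.univ.sup d = n

/-- A reduced representation: the components have no common `j`-th roots. -/
def ReducedRep {m : ℕ} (f : Fin (m + 1) → ℝ → ℝ) : Prop :=
  ¬ ∃ (j : ℕ) (x : ℝ), 1 ≤ j ∧ ∀ i, 0 < omega (f i) j x

/-- Two representations define the same curve in `TP^m`: pointwise they differ by a scalar. -/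
def SameCurve {m : ℕ} (f g : Fin (m + 1) → ℝ → ℝ) : Prop :=
  ∀ x : ℝ, ∃ lam : ℝ, ∀ i, f i x = g i x + lam

/-- The curve represented by `f` is non-constant. -/
def NonConstantCurve {m : ℕ} (f : Fin (m + 1) → ℝ → ℝ) : Prop :=
  ¬ ∀ x y : ℝ, ∃ lam : ℝ, ∀ i, f i x = f i y + lam

/-- The tropical Casoratian `C₀(f₀, …, f_m)(x) = max_σ Σ_i f_i(x + σ(i))`. -/
def Casoratian {m : ℕ} (f : Fin (m + 1) → ℝ → ℝ) (x : ℝ) : ℝ :=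
  ⨆ σ : Equiv.Perm (Fin (m + 1)), ∑ i, f i (x + ((σ i : ℕ) : ℝ))

end Trop

end


namespace TropAux
open Trop Polynomial Filter

/-- Bundled piecewise-polynomial structure data. -/
structure PW (n : ℕ) (f : ℝ → ℝ) (x : ℤ → ℝ) (p : ℤ → Polynomial ℝ) : Prop where
  mono : StrictMono x
  top : Tendsto x atTop atTop
  bot : Tendsto x atBot atBot
  piece : ∀ i : ℤ, ∀ y ∈ Set.Icc (x (i - 1)) (x i), f y = (p i).eval y
  deg : ∀ i : ℤ, (p i).natDegree ≤ n

lemma pw_of (n : ℕ) (f : ℝ → ℝ) (h : IsNthPiecewisePoly n f) :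
    ∃ x p, PW n f x p := by
  obtain ⟨_, x, p, h1, h2, h3, h4, h5, _⟩ := h
  exact ⟨x, p, ⟨h1, h2, h3, h4, h5⟩⟩

lemma rightPiece_unique {f : ℝ → ℝ} {z : ℝ} {P Q : Polynomial ℝ}
    (hP : IsRightPiece f z P) (hQ : IsRightPiece f z Q) : P = Q := by
  obtain ⟨e1, he1, h1⟩ := hP
  obtain ⟨e2, he2, h2⟩ := hQ
  have hlt : z < z + min e1 e2 := by
    have := lt_min he1 he2; linarith
  refine Polynomial.eq_of_infinite_eval_eq P Q ((Set.Ico_infinite hlt).mono ?_)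
  intro y hy
  have hy1 : y ∈ Set.Ico z (z + e1) :=
    ⟨hy.1, hy.2.trans_le (by have := min_le_left e1 e2; linarith)⟩
  have hy2 : y ∈ Set.Ico z (z + e2) :=
    ⟨hy.1, hy.2.trans_le (by have := min_le_right e1 e2; linarith)⟩
  have := (h1 y hy1).symm.trans (h2 y hy2)
  simpa [Set.mem_setOf_eq] using this

lemma leftPiece_unique {f : ℝ → ℝ} {z : ℝ} {P Q : Polynomial ℝ}
    (hP : IsLeftPiece f z P) (hQ : IsLeftPiece f z Q) : P = Q := by
  obtain ⟨e1, he1, h1⟩ := hP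
  obtain ⟨e2, he2, h2⟩ := hQ
  have hlt : z - min e1 e2 < z := by
    have := lt_min he1 he2; linarith
  refine Polynomial.eq_of_infinite_eval_eq P Q ((Set.Ioc_infinite hlt).mono ?_)
  intro y hy
  have hy1 : y ∈ Set.Ioc (z - e1) z :=
    ⟨lt_of_le_of_lt (by have := min_le_left e1 e2; linarith) hy.1, hy.2⟩
  have hy2 : y ∈ Set.Ioc (z - e2) z :=
    ⟨lt_of_le_of_lt (by have := min_le_right e1 e2; linarith) hy.1, hy.2⟩
  have := (h1 y hy1).symm.trans (h2 y hy2)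
  simpa [Set.mem_setOf_eq] using this

lemma rightPoly_eq {f : ℝ → ℝ} {z : ℝ} {P : Polynomial ℝ} (h : IsRightPiece f z P) :
    rightPoly f z = P := by
  have hex : ∃ Q, IsRightPiece f z Q := ⟨P, h⟩
  rw [rightPoly, dif_pos hex]
  exact rightPiece_unique hex.choose_spec h

lemma leftPoly_eq {f : ℝ → ℝ} {z : ℝ} {P : Polynomial ℝ} (h : IsLeftPiece f z P) :
    leftPoly f z = P := by
  have hex : ∃ Q, IsLeftPiece f z Q := ⟨P, h⟩
  rw [leftPoly, dif_pos hex]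
  exact leftPiece_unique hex.choose_spec h

variable {n k : ℕ} {f : ℝ → ℝ} {x : ℤ → ℝ} {p : ℤ → Polynomial ℝ}

lemma PW.leastGT (h : PW n f x p) (z : ℝ) :
    ∃ i : ℤ, z < x i ∧ x (i - 1) ≤ z ∧ ∀ k, z < x k → i ≤ k := by
  have hbdd : ∃ b : ℤ, ∀ k : ℤ, z < x k → b ≤ k := by
    obtain ⟨N, hN⟩ := eventually_atBot.1 (h.bot.eventually (eventually_lt_atBot z))
    refine ⟨N + 1, fun k hk => ?_⟩
    by_contra hc
    exact absurd (hN k (by omega)) (not_lt.2 hk.le)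
  have hinh : ∃ k : ℤ, z < x k := (h.top.eventually_gt_atTop z).exists
  obtain ⟨i, hi, hmin⟩ := Int.exists_least_of_bdd hbdd hinh
  refine ⟨i, hi, ?_, hmin⟩
  by_contra hc
  have := hmin (i - 1) (lt_of_not_ge hc)
  omega

lemma PW.leastGE (h : PW n f x p) (z : ℝ) :
    ∃ i : ℤ, z ≤ x i ∧ x (i - 1) < z ∧ ∀ k, z ≤ x k → i ≤ k := by
  have hbdd : ∃ b : ℤ, ∀ k : ℤ, z ≤ x k → b ≤ k := by
    obtain ⟨N, hN⟩ := eventually_atBot.1 (h.bot.eventually (eventually_lt_atBot z))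
    refine ⟨N + 1, fun k hk => ?_⟩
    by_contra hc
    exact absurd (hN k (by omega)) (not_lt.2 hk)
  have hinh : ∃ k : ℤ, z ≤ x k := ⟨_, ((h.top.eventually_gt_atTop z).exists).choose_spec.le⟩
  obtain ⟨i, hi, hmin⟩ := Int.exists_least_of_bdd hbdd hinh
  refine ⟨i, hi, ?_, hmin⟩
  by_contra hc
  have := hmin (i - 1) (le_of_not_gt hc)
  omega

lemma PW.rightPoly_eq_of (h : PW n f x p) {i : ℤ} {z : ℝ} (h1 : x (i - 1) ≤ z) (h2 : z < x i) :
    rightPoly f z = p i := by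
  apply rightPoly_eq
  refine ⟨x i - z, by linarith, fun y hy => ?_⟩
  exact h.piece i y ⟨h1.trans hy.1, by have := hy.2; linarith⟩

lemma PW.leftPoly_eq_of (h : PW n f x p) {i : ℤ} {z : ℝ} (h1 : x (i - 1) < z) (h2 : z ≤ x i) :
    leftPoly f z = p i := by
  apply leftPoly_eq
  refine ⟨z - x (i - 1), by linarith, fun y hy => ?_⟩
  exact h.piece i y ⟨by have := hy.1; linarith, hy.2.trans h2⟩

lemma PW.exists_rightPiece (h : PW n f x p) (z : ℝ) : ∃ P, IsRightPiece f z P := by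
  obtain ⟨i, h2, h1, -⟩ := h.leastGT z
  exact ⟨p i, ⟨x i - z, by linarith, fun y hy =>
    h.piece i y ⟨h1.trans hy.1, by have := hy.2; linarith⟩⟩⟩

lemma PW.exists_leftPiece (h : PW n f x p) (z : ℝ) : ∃ P, IsLeftPiece f z P := by
  obtain ⟨i, h2, h1, -⟩ := h.leastGE z
  exact ⟨p i, ⟨z - x (i - 1), by linarith, fun y hy =>
    h.piece i y ⟨by have := hy.1; linarith, hy.2.trans h2⟩⟩⟩

lemma sgnR_pos {z : ℝ} (hz : 0 < z) : sgnR z = 1 := if_neg (not_lt.2 hz.le)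
lemma sgnL_pos {z : ℝ} (hz : 0 < z) : sgnL z = 1 := if_pos hz
lemma sgnR_neg {z : ℝ} (hz : z < 0) : sgnR z = -1 := if_pos hz
lemma sgnL_neg {z : ℝ} (hz : z < 0) : sgnL z = -1 := if_neg (not_lt.2 hz.le)
lemma sgnR_zero : sgnR (0 : ℝ) = 1 := if_neg (lt_irrefl 0)
lemma sgnL_zero : sgnL (0 : ℝ) = -1 := if_neg (lt_irrefl 0)

lemma PW.omega_eq_zero (h : PW n f x p) {z : ℝ} (hz0 : z ≠ 0) (hz : z ∉ Set.range x) (j : ℕ) :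
    omega f j z = 0 := by
  obtain ⟨i, h2, h1, -⟩ := h.leastGT z
  have h1' : x (i - 1) < z := lt_of_le_of_ne h1 (fun e => hz ⟨i - 1, e⟩)
  have hR : rightPoly f z = p i := h.rightPoly_eq_of h1 h2
  have hL : leftPoly f z = p i := h.leftPoly_eq_of h1' h2.le
  have hsgn : sgnR z = sgnL z := by
    rcases lt_trichotomy z 0 with hlt | he | hgt
    · rw [sgnR_neg hlt, sgnL_neg hlt]
    · exact absurd he hz0
    · rw [sgnR_pos hgt, sgnL_pos hgt]
  rw [omega, rderiv, lderiv, hR, hL, hsgn]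
  simp

lemma rderiv_eq (f : ℝ → ℝ) (j : ℕ) (z : ℝ) :
    rderiv f j z = (j.factorial : ℝ) * ((hasseDeriv j (rightPoly f z)).eval z) := by
  have h : (fun q : Polynomial ℝ => derivative q)^[j] (rightPoly f z)
      = (Polynomial.derivative (R := ℝ))^[j] (rightPoly f z) := rfl
  rw [rderiv, h, ← Polynomial.factorial_smul_hasseDeriv]
  simp [LinearMap.smul_apply, nsmul_eq_mul]

lemma lderiv_eq (f : ℝ → ℝ) (j : ℕ) (z : ℝ) :
    lderiv f j z = (j.factorial : ℝ) * ((hasseDeriv j (leftPoly f z)).eval z) := by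
  have h : (fun q : Polynomial ℝ => derivative q)^[j] (leftPoly f z)
      = (Polynomial.derivative (R := ℝ))^[j] (leftPoly f z) := rfl
  rw [lderiv, h, ← Polynomial.factorial_smul_hasseDeriv]
  simp [LinearMap.smul_apply, nsmul_eq_mul]

lemma omega_pos_pt {f : ℝ → ℝ} {z : ℝ} (hz : 0 < z) (j : ℕ) :
    omega f j z
      = (hasseDeriv j (rightPoly f z)).eval z - (hasseDeriv j (leftPoly f z)).eval z := by
  have hfac : (j.factorial : ℝ) ≠ 0 := Nat.cast_ne_zero.2 j.factorial_ne_zero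
  rw [omega, sgnR_pos hz, sgnL_pos hz, rderiv_eq, lderiv_eq]
  field_simp
  ring

lemma omega_neg_pt {f : ℝ → ℝ} {z : ℝ} (hz : z < 0) (j : ℕ) :
    omega f j z = (-1 : ℝ) ^ (j + 1) *
      ((hasseDeriv j (rightPoly f z)).eval z - (hasseDeriv j (leftPoly f z)).eval z) := by
  have hfac : (j.factorial : ℝ) ≠ 0 := Nat.cast_ne_zero.2 j.factorial_ne_zero
  rw [omega, sgnR_neg hz, sgnL_neg hz, rderiv_eq, lderiv_eq]
  field_simp

lemma hasse_eval_zero (j : ℕ) (P : Polynomial ℝ) : (hasseDeriv j P).eval 0 = P.coeff j := by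
  rw [← Polynomial.taylor_coeff, Polynomial.taylor_zero]

lemma omega_zero_pt {f : ℝ → ℝ} (j : ℕ) :
    omega f j 0 = (rightPoly f 0).coeff j + (-1 : ℝ) ^ j * (leftPoly f 0).coeff j := by
  have hfac : (j.factorial : ℝ) ≠ 0 := Nat.cast_ne_zero.2 j.factorial_ne_zero
  rw [omega, sgnR_zero, sgnL_zero, rderiv_eq, lderiv_eq, hasse_eval_zero, hasse_eval_zero]
  rw [pow_succ]
  field_simp
  ring

lemma range_succ_split (n : ℕ) : Finset.range (n + 1) = insert 0 (Finset.Icc 1 n) := by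
  ext a
  simp only [Finset.mem_range, Finset.mem_insert, Finset.mem_Icc]
  omega

lemma taylor_expand {n : ℕ} {D : Polynomial ℝ} (hD : D.natDegree ≤ n) (z y : ℝ) :
    D.eval y = D.eval z + ∑ j ∈ Finset.Icc 1 n, (hasseDeriv j D).eval z * (y - z) ^ j := by
  have h1 : D.eval y = (Polynomial.taylor z D).eval (y - z) := by
    rw [Polynomial.taylor_eval]; ring_nf
  rw [h1, Polynomial.eval_eq_sum_range' (n := n + 1)
    (by rw [Polynomial.natDegree_taylor]; omega), range_succ_split,
    Finset.sum_insert (by simp)]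
  simp [Polynomial.taylor_coeff, Polynomial.taylor_coeff_zero]

lemma sum_coeff_eq {n : ℕ} {P : Polynomial ℝ} (hP : P.natDegree ≤ n) (y : ℝ) :
    ∑ j ∈ Finset.Icc 1 n, P.coeff j * y ^ j = P.eval y - P.eval 0 := by
  have h1 : P.eval y = ∑ j ∈ Finset.range (n + 1), P.coeff j * y ^ j :=
    Polynomial.eval_eq_sum_range' (lt_of_le_of_lt hP (Nat.lt_succ_self n)) y
  rw [range_succ_split, Finset.sum_insert (by simp)] at h1
  rw [Polynomial.coeff_zero_eq_eval_zero] at h1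
  simp at h1
  linarith

lemma tele (p : ℤ → Polynomial ℝ) (a : ℤ) :
    ∀ b, a ≤ b → p b = p a + ∑ i ∈ Finset.Ico a b, (p (i + 1) - p i) := by
  refine Int.le_induction ?_ ?_
  · simp
  · intro b hb ih
    rw [show Finset.Ico a (b + 1) = insert b (Finset.Ico a b) by
      ext k; simp only [Finset.mem_Ico, Finset.mem_insert]; omega]
    rw [Finset.sum_insert (by simp), ih]
    abel

lemma PW.break_finite (h : PW n f x p) (r : ℝ) :
    {z : ℝ | z ∈ Set.Ioo (-r) r ∧ z ∈ Set.range x}.Finite := by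
  obtain ⟨N, hN⟩ := eventually_atTop.1 (h.top.eventually_gt_atTop r)
  obtain ⟨M, hM⟩ := eventually_atBot.1 (h.bot.eventually_lt_atBot (-r))
  apply Set.Finite.subset ((Set.finite_Icc M N).image x)
  rintro z ⟨hz, i, rfl⟩
  refine ⟨i, ⟨?_, ?_⟩, rfl⟩
  · by_contra hc; exact absurd (hM i (by omega)) (not_lt.2 hz.1.le)
  · by_contra hc; exact absurd (hN i (by omega)) (not_lt.2 hz.2.le)

lemma PW.omega_support_finite (h : PW n f x p) (r : ℝ) (j : ℕ) :
    {z : ℝ | z ∈ Set.Ioo (-r) r ∧ omega f j z ≠ 0}.Finite := by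
  apply Set.Finite.subset ((h.break_finite r).insert 0)
  rintro z ⟨hz, hω⟩
  by_cases h0 : z = 0
  · exact Set.mem_insert_iff.2 (Or.inl h0)
  · refine Set.mem_insert_iff.2 (Or.inr ⟨hz, ?_⟩)
    by_contra hc
    exact hω (h.omega_eq_zero h0 hc j)

lemma tsum_set_eq_sum {A : Set ℝ} (hA : A.Finite) (g : ℝ → ℝ) :
    ∑' (z : A), g z = ∑ z ∈ hA.toFinset, g z := by
  rw [tsum_subtype]
  rw [tsum_eq_sum (s := hA.toFinset)
    (fun b hb => Set.indicator_of_notMem (by simpa using hb) g)]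
  exact Finset.sum_congr rfl fun z hz => Set.indicator_of_mem (by simpa using hz) g

lemma nroot_eq_sum {f : ℝ → ℝ} {j : ℕ} {r : ℝ}
    (hA : {z : ℝ | z ∈ Set.Ioo (-r) r ∧ 0 < omega f j z}.Finite) :
    Nroot j r f = (1 / 2) * ∑ z ∈ hA.toFinset, |omega f j z| * (r - |z|) ^ j := by
  rw [Nroot]
  congr 1
  exact tsum_set_eq_sum hA (fun z => |omega f j z| * (r - |z|) ^ j)

lemma npole_eq_sum {f : ℝ → ℝ} {j : ℕ} {r : ℝ}
    (hA : {z : ℝ | z ∈ Set.Ioo (-r) r ∧ omega f j z < 0}.Finite) :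
    Npole j r f = (1 / 2) * ∑ z ∈ hA.toFinset, |omega f j z| * (r - |z|) ^ j := by
  rw [Npole]
  congr 1
  exact tsum_set_eq_sum hA (fun z => |omega f j z| * (r - |z|) ^ j)

lemma PW.jumpA (h : PW k f x p) (hk : k ≤ n) (i : ℤ) (hz : 0 < x i) (r : ℝ) :
    ∑ j ∈ Finset.Icc 1 n, omega f j (x i) * (r - |x i|) ^ j = (p (i + 1) - p i).eval r := by
  have e : (i + 1 : ℤ) - 1 = i := by ring
  have hlt : x i < x (i + 1) := h.mono (by omega)
  have hR : rightPoly f (x i) = p (i + 1) := h.rightPoly_eq_of (by rw [e]) hlt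
  have hL : leftPoly f (x i) = p i := h.leftPoly_eq_of (h.mono (by omega)) le_rfl
  have hv1 : f (x i) = (p i).eval (x i) := h.piece i _ ⟨(h.mono (by omega)).le, le_rfl⟩
  have hv2 : f (x i) = (p (i + 1)).eval (x i) := h.piece (i + 1) _ ⟨by rw [e], hlt.le⟩
  have hΔ0 : (p (i + 1) - p i).eval (x i) = 0 := by rw [Polynomial.eval_sub]; linarith
  have hdeg : (p (i + 1) - p i).natDegree ≤ n :=
    le_trans (Polynomial.natDegree_sub_le _ _)
      (max_le (le_trans (h.deg _) hk) (le_trans (h.deg _) hk))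
  have key := taylor_expand hdeg (x i) r
  rw [hΔ0, zero_add] at key
  rw [key]
  refine Finset.sum_congr rfl fun j hj => ?_
  rw [omega_pos_pt hz, hR, hL, abs_of_pos hz, ← Polynomial.eval_sub, ← map_sub]

lemma PW.jumpB (h : PW k f x p) (hk : k ≤ n) (i : ℤ) (hz : x i < 0) (r : ℝ) :
    ∑ j ∈ Finset.Icc 1 n, omega f j (x i) * (r - |x i|) ^ j
      = -((p (i + 1) - p i).eval (-r)) := by
  have e : (i + 1 : ℤ) - 1 = i := by ring
  have hlt : x i < x (i + 1) := h.mono (by omega)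
  have hR : rightPoly f (x i) = p (i + 1) := h.rightPoly_eq_of (by rw [e]) hlt
  have hL : leftPoly f (x i) = p i := h.leftPoly_eq_of (h.mono (by omega)) le_rfl
  have hv1 : f (x i) = (p i).eval (x i) := h.piece i _ ⟨(h.mono (by omega)).le, le_rfl⟩
  have hv2 : f (x i) = (p (i + 1)).eval (x i) := h.piece (i + 1) _ ⟨by rw [e], hlt.le⟩
  have hΔ0 : (p (i + 1) - p i).eval (x i) = 0 := by rw [Polynomial.eval_sub]; linarith
  have hdeg : (p (i + 1) - p i).natDegree ≤ n :=
    le_trans (Polynomial.natDegree_sub_le _ _)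
      (max_le (le_trans (h.deg _) hk) (le_trans (h.deg _) hk))
  have key := taylor_expand hdeg (x i) (-r)
  rw [hΔ0, zero_add] at key
  rw [key, ← Finset.sum_neg_distrib]
  refine Finset.sum_congr rfl fun j hj => ?_
  rw [omega_neg_pt hz, hR, hL, abs_of_neg hz, ← Polynomial.eval_sub, ← map_sub]
  have harg : (-r - x i) ^ j = (-1 : ℝ) ^ j * (r - - x i) ^ j := by
    rw [show (-r - x i) = (-1 : ℝ) * (r - - x i) by ring, mul_pow]
  rw [harg, pow_succ]
  ring

lemma PW.jumpC (h : PW k f x p) (hk : k ≤ n) {P Q : Polynomial ℝ}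
    (hR : rightPoly f 0 = P) (hL : leftPoly f 0 = Q)
    (hv0 : P.eval 0 = f 0) (hv3 : Q.eval 0 = f 0) (r : ℝ)
    (hdP : P.natDegree ≤ n) (hdQ : Q.natDegree ≤ n) :
    ∑ j ∈ Finset.Icc 1 n, omega f j 0 * (r - |(0 : ℝ)|) ^ j
      = P.eval r + Q.eval (-r) - 2 * f 0 := by
  have e1 : ∀ j ∈ Finset.Icc 1 n, omega f j 0 * (r - |(0 : ℝ)|) ^ j
      = P.coeff j * r ^ j + Q.coeff j * (-r) ^ j := by
    intro j hj
    rw [omega_zero_pt, hR, hL, abs_zero, sub_zero, neg_pow]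
    ring
  rw [Finset.sum_congr rfl e1, Finset.sum_add_distrib, sum_coeff_eq hdP, sum_coeff_eq hdQ,
    hv0, hv3]
  ring

lemma PW.jensen (h : PW k f x p) (hk : k ≤ n) (hnp : NoPoles f) {r : ℝ} (hr : 0 < r) :
    ∑ j ∈ Finset.Icc 1 n, Nroot j r f = (f r + f (-r)) / 2 - f 0 := by
  obtain ⟨i2, hi2a, hi2b, hi2min⟩ := h.leastGT (-r)
  obtain ⟨i3, hi3a, hi3b, hi3min⟩ := h.leastGE 0
  obtain ⟨i0, hi0a, hi0b, hi0min⟩ := h.leastGT 0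
  obtain ⟨i1, hi1a, hi1b, hi1min⟩ := h.leastGE r
  have hi23 : i2 ≤ i3 := hi2min i3 (by linarith)
  have hi01 : i0 ≤ i1 := hi0min i1 (by linarith)
  set S : Finset ℝ := (Finset.Ico i2 i3 ∪ Finset.Ico i0 i1).image x with hS
  set T : Finset ℝ := insert (0 : ℝ) S with hT
  have hrangeA : ∀ i ∈ Finset.Ico i0 i1, 0 < x i ∧ x i < r := by
    intro i hi
    rw [Finset.mem_Ico] at hi
    constructor
    · exact lt_of_lt_of_le hi0a (h.mono.monotone hi.1)
    · calc x i ≤ x (i1 - 1) := h.mono.monotone (by omega)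
        _ < r := hi1b
  have hrangeB : ∀ i ∈ Finset.Ico i2 i3, -r < x i ∧ x i < 0 := by
    intro i hi
    rw [Finset.mem_Ico] at hi
    constructor
    · exact lt_of_lt_of_le hi2a (h.mono.monotone hi.1)
    · calc x i ≤ x (i3 - 1) := h.mono.monotone (by omega)
        _ < 0 := hi3b
  have h0S : (0 : ℝ) ∉ S := by
    rw [hS]
    simp only [Finset.mem_image, Finset.mem_union, not_exists]
    rintro i ⟨hi | hi, he⟩
    · exact absurd he.symm (ne_of_lt (hrangeB i hi).2).symm
    · exact absurd he ((hrangeA i hi).1.ne')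
  have hTIoo : ∀ z ∈ T, z ∈ Set.Ioo (-r) r := by
    intro z hz
    rw [hT, Finset.mem_insert] at hz
    rcases hz with rfl | hz
    · exact ⟨by linarith, hr⟩
    · rw [hS] at hz
      obtain ⟨i, hi, rfl⟩ := Finset.mem_image.1 hz
      rcases Finset.mem_union.1 hi with hi | hi
      · obtain ⟨ha, hb⟩ := hrangeB i hi
        exact ⟨ha, by linarith⟩
      · obtain ⟨ha, hb⟩ := hrangeA i hi
        exact ⟨by linarith, hb⟩
  have hcover : ∀ z : ℝ, z ∈ Set.Ioo (-r) r → z ∉ T → ∀ j, omega f j z = 0 := by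
    intro z hz hzT j
    have hz0 : z ≠ 0 := fun e => hzT (by rw [hT, e]; exact Finset.mem_insert_self 0 S)
    by_cases hzr : z ∈ Set.range x
    · obtain ⟨i, rfl⟩ := hzr
      exfalso
      apply hzT
      rw [hT]
      refine Finset.mem_insert_of_mem ?_
      rw [hS]
      refine Finset.mem_image.2 ⟨i, Finset.mem_union.2 ?_, rfl⟩
      rcases lt_trichotomy (x i) 0 with hlt | he | hgt
      · left
        rw [Finset.mem_Ico]
        refine ⟨hi2min i hz.1, ?_⟩
        by_contra hc
        have : x i3 ≤ x i := h.mono.monotone (by omega)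
        linarith
      · exact absurd he hz0
      · right
        rw [Finset.mem_Ico]
        refine ⟨hi0min i hgt, ?_⟩
        by_contra hc
        have : x i1 ≤ x i := h.mono.monotone (by omega)
        linarith [hz.2]
    · exact h.omega_eq_zero hz0 hzr j
  have hroot : ∀ j ∈ Finset.Icc 1 n,
      Nroot j r f = (1 / 2) * ∑ z ∈ T, omega f j z * (r - |z|) ^ j := by
    intro j hj
    have hjle : 1 ≤ j := (Finset.mem_Icc.1 hj).1
    have hA : {z : ℝ | z ∈ Set.Ioo (-r) r ∧ 0 < omega f j z}.Finite :=
      (h.omega_support_finite r j).subset (fun z hz => ⟨hz.1, ne_of_gt hz.2⟩)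
    rw [nroot_eq_sum hA]
    congr 1
    rw [Finset.sum_congr rfl (fun z hz => by
      rw [abs_of_pos ((hA.mem_toFinset.1 hz).2)])]
    apply Finset.sum_subset
    · intro z hz
      have hz' := hA.mem_toFinset.1 hz
      by_contra hc
      exact absurd (hcover z hz'.1 hc j) (ne_of_gt hz'.2)
    · intro z hzT hzA
      have hzIoo := hTIoo z hzT
      have : ¬ (0 < omega f j z) := fun hpos => hzA (hA.mem_toFinset.2 ⟨hzIoo, hpos⟩)
      have := hnp j hjle z
      have : omega f j z = 0 := le_antisymm (not_lt.1 ‹¬ 0 < omega f j z›) this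
      rw [this, zero_mul]
  rw [Finset.sum_congr rfl hroot, ← Finset.mul_sum, Finset.sum_comm]
  have hinj : ∀ a ∈ Finset.Ico i2 i3 ∪ Finset.Ico i0 i1,
      ∀ b ∈ Finset.Ico i2 i3 ∪ Finset.Ico i0 i1, x a = x b → a = b :=
    fun a _ b _ e => h.mono.injective e
  have hdisj : Disjoint (Finset.Ico i2 i3) (Finset.Ico i0 i1) := by
    rw [Finset.disjoint_left]
    intro a ha hb
    rw [Finset.mem_Ico] at ha hb
    have hi30 : i3 ≤ i0 := hi3min i0 hi0a.le
    omega
  have hsplit : ∑ z ∈ T, (∑ j ∈ Finset.Icc 1 n, omega f j z * (r - |z|) ^ j)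
      = (∑ j ∈ Finset.Icc 1 n, omega f j 0 * (r - |(0 : ℝ)|) ^ j)
        + ((∑ i ∈ Finset.Ico i2 i3, ∑ j ∈ Finset.Icc 1 n,
              omega f j (x i) * (r - |x i|) ^ j)
          + ∑ i ∈ Finset.Ico i0 i1, ∑ j ∈ Finset.Icc 1 n,
              omega f j (x i) * (r - |x i|) ^ j) := by
    rw [hT, Finset.sum_insert h0S, hS, Finset.sum_image hinj, Finset.sum_union hdisj]
  rw [hsplit]
  have hPv : ((p i0).eval 0 : ℝ) = f 0 := (h.piece i0 0 ⟨hi0b, hi0a.le⟩).symm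
  have hQv : ((p i3).eval 0 : ℝ) = f 0 := (h.piece i3 0 ⟨hi3b.le, hi3a⟩).symm
  have hC := h.jumpC hk (h.rightPoly_eq_of hi0b hi0a) (h.leftPoly_eq_of hi3b hi3a)
    hPv hQv r (le_trans (h.deg i0) hk) (le_trans (h.deg i3) hk)
  have hsumA : ∑ i ∈ Finset.Ico i0 i1, ∑ j ∈ Finset.Icc 1 n,
      omega f j (x i) * (r - |x i|) ^ j
      = ∑ i ∈ Finset.Ico i0 i1, ((p (i + 1) - p i).eval r) :=
    Finset.sum_congr rfl fun i hi => h.jumpA hk i (hrangeA i hi).1 r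
  have hsumB : ∑ i ∈ Finset.Ico i2 i3, ∑ j ∈ Finset.Icc 1 n,
      omega f j (x i) * (r - |x i|) ^ j
      = ∑ i ∈ Finset.Ico i2 i3, -((p (i + 1) - p i).eval (-r)) :=
    Finset.sum_congr rfl fun i hi => h.jumpB hk i (hrangeB i hi).2 r
  have htele1 : (p i1).eval r = (p i0).eval r
      + ∑ i ∈ Finset.Ico i0 i1, ((p (i + 1) - p i).eval r) := by
    rw [← Polynomial.eval_finset_sum, ← Polynomial.eval_add, ← tele p i0 i1 hi01]
  have htele2 : (p i3).eval (-r) = (p i2).eval (-r)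
      + ∑ i ∈ Finset.Ico i2 i3, ((p (i + 1) - p i).eval (-r)) := by
    rw [← Polynomial.eval_finset_sum, ← Polynomial.eval_add, ← tele p i2 i3 hi23]
  have hfr : f r = (p i1).eval r := h.piece i1 r ⟨hi1b.le, hi1a⟩
  have hfnr : f (-r) = (p i2).eval (-r) := h.piece i2 (-r) ⟨hi2b, hi2a.le⟩
  have hf0 : f 0 = (p i3).eval 0 := h.piece i3 0 ⟨hi3b.le, hi3a⟩
  rw [hC, hsumA, hsumB, Finset.sum_neg_distrib]
  rw [hfr, hfnr]
  have := hQv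
  linarith [htele1, htele2]

lemma sub_right_piece {fi fl : ℝ → ℝ} {z : ℝ} {P Q : Polynomial ℝ}
    (hP : IsRightPiece fi z P) (hQ : IsRightPiece fl z Q) :
    IsRightPiece (fun t => fi t - fl t) z (P - Q) := by
  obtain ⟨e1, he1, h1⟩ := hP
  obtain ⟨e2, he2, h2⟩ := hQ
  refine ⟨min e1 e2, lt_min he1 he2, fun y hy => ?_⟩
  have hy1 : y ∈ Set.Ico z (z + e1) :=
    ⟨hy.1, hy.2.trans_le (by have := min_le_left e1 e2; linarith)⟩
  have hy2 : y ∈ Set.Ico z (z + e2) :=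
    ⟨hy.1, hy.2.trans_le (by have := min_le_right e1 e2; linarith)⟩
  show fi y - fl y = _
  rw [Polynomial.eval_sub, h1 y hy1, h2 y hy2]

lemma sub_left_piece {fi fl : ℝ → ℝ} {z : ℝ} {P Q : Polynomial ℝ}
    (hP : IsLeftPiece fi z P) (hQ : IsLeftPiece fl z Q) :
    IsLeftPiece (fun t => fi t - fl t) z (P - Q) := by
  obtain ⟨e1, he1, h1⟩ := hP
  obtain ⟨e2, he2, h2⟩ := hQ
  refine ⟨min e1 e2, lt_min he1 he2, fun y hy => ?_⟩
  have hy1 : y ∈ Set.Ioc (z - e1) z :=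
    ⟨lt_of_le_of_lt (by have := min_le_left e1 e2; linarith) hy.1, hy.2⟩
  have hy2 : y ∈ Set.Ioc (z - e2) z :=
    ⟨lt_of_le_of_lt (by have := min_le_right e1 e2; linarith) hy.1, hy.2⟩
  show fi y - fl y = _
  rw [Polynomial.eval_sub, h1 y hy1, h2 y hy2]

lemma iterate_deriv_eq (j : ℕ) (P : Polynomial ℝ) :
    (fun q : Polynomial ℝ => derivative q)^[j] P = (Polynomial.derivative (R := ℝ))^[j] P := rfl

lemma omega_sub {fi fl : ℝ → ℝ} (z : ℝ)
    (h1 : ∃ P, IsRightPiece fi z P) (h2 : ∃ P, IsRightPiece fl z P)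
    (h3 : ∃ P, IsLeftPiece fi z P) (h4 : ∃ P, IsLeftPiece fl z P) (j : ℕ) :
    omega (fun t => fi t - fl t) j z = omega fi j z - omega fl j z := by
  obtain ⟨P1, hP1⟩ := h1
  obtain ⟨P2, hP2⟩ := h2
  obtain ⟨Q1, hQ1⟩ := h3
  obtain ⟨Q2, hQ2⟩ := h4
  have hR : rightPoly (fun t => fi t - fl t) z = P1 - P2 :=
    rightPoly_eq (sub_right_piece hP1 hP2)
  have hL : leftPoly (fun t => fi t - fl t) z = Q1 - Q2 :=
    leftPoly_eq (sub_left_piece hQ1 hQ2)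
  have hRi : rightPoly fi z = P1 := rightPoly_eq hP1
  have hRl : rightPoly fl z = P2 := rightPoly_eq hP2
  have hLi : leftPoly fi z = Q1 := leftPoly_eq hQ1
  have hLl : leftPoly fl z = Q2 := leftPoly_eq hQ2
  rw [omega, omega, omega, rderiv, rderiv, rderiv, lderiv, lderiv, lderiv,
    hR, hL, hRi, hRl, hLi, hLl, iterate_deriv_eq, iterate_deriv_eq, iterate_deriv_eq,
    iterate_deriv_eq, iterate_deriv_eq, iterate_deriv_eq,
    Polynomial.iterate_derivative_sub, Polynomial.iterate_derivative_sub,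
    Polynomial.eval_sub, Polynomial.eval_sub]
  ring

lemma npole_le_nroot {fi fl : ℝ → ℝ} {j : ℕ} (hj : 1 ≤ j) {r : ℝ} (hr : 0 < r)
    (hi_np : NoPoles fi) (hl_np : NoPoles fl)
    (hpieces : ∀ z : ℝ, (∃ P, IsRightPiece fi z P) ∧ (∃ P, IsRightPiece fl z P)
      ∧ (∃ P, IsLeftPiece fi z P) ∧ (∃ P, IsLeftPiece fl z P))
    (hfin : {z : ℝ | z ∈ Set.Ioo (-r) r ∧ omega fl j z ≠ 0}.Finite) :
    Npole j r (fun t => fi t - fl t) ≤ Nroot j r fl := by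
  have homega : ∀ z : ℝ, omega (fun t => fi t - fl t) j z = omega fi j z - omega fl j z :=
    fun z => omega_sub z (hpieces z).1 (hpieces z).2.1 (hpieces z).2.2.1 (hpieces z).2.2.2 j
  have hAroot : {z : ℝ | z ∈ Set.Ioo (-r) r ∧ 0 < omega fl j z}.Finite :=
    hfin.subset (fun z hz => ⟨hz.1, ne_of_gt hz.2⟩)
  have hkey : ∀ z : ℝ, omega (fun t => fi t - fl t) j z < 0 → 0 < omega fl j z := by
    intro z hz
    have h1 := hi_np j hj z
    have h2 := homega z
    linarith
  have hApole : {z : ℝ | z ∈ Set.Ioo (-r) r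
      ∧ omega (fun t => fi t - fl t) j z < 0}.Finite :=
    hAroot.subset (fun z hz => ⟨hz.1, hkey z hz.2⟩)
  rw [npole_eq_sum hApole, nroot_eq_sum hAroot]
  have hsub : hApole.toFinset ⊆ hAroot.toFinset := by
    intro z hz
    rw [Set.Finite.mem_toFinset] at hz ⊢
    exact ⟨hz.1, hkey z hz.2⟩
  have hstep : ∑ z ∈ hApole.toFinset, |omega (fun t => fi t - fl t) j z| * (r - |z|) ^ j
      ≤ ∑ z ∈ hApole.toFinset, |omega fl j z| * (r - |z|) ^ j := by
    refine Finset.sum_le_sum fun z hz => ?_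
    rw [Set.Finite.mem_toFinset] at hz
    have hc : (0 : ℝ) ≤ (r - |z|) ^ j := by
      have : |z| < r := abs_lt.2 ⟨hz.1.1, hz.1.2⟩
      exact pow_nonneg (by linarith) j
    refine mul_le_mul_of_nonneg_right ?_ hc
    rw [abs_of_neg hz.2, abs_of_pos (hkey z hz.2)]
    have h1 := hi_np j hj z
    have h2 := homega z
    linarith
  have hstep2 : ∑ z ∈ hApole.toFinset, |omega fl j z| * (r - |z|) ^ j
      ≤ ∑ z ∈ hAroot.toFinset, |omega fl j z| * (r - |z|) ^ j := by
    refine Finset.sum_le_sum_of_subset_of_nonneg hsub fun z hz _ => ?_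
    rw [Set.Finite.mem_toFinset] at hz
    have : |z| < r := abs_lt.2 ⟨hz.1.1, hz.1.2⟩
    exact mul_nonneg (abs_nonneg _) (pow_nonneg (by linarith) j)
  have := le_trans hstep hstep2
  linarith

end TropAux



section MainProof
open Trop TropAux

/-- for a non-constant `n`-th tropical holomorphic curve with reduced
representation `(f₀, …, f_m)`, one has `T(r, f_i ⊘ f_l) ≤ T_f(r) + O(1)` as `r → ∞`. -/
theorem statement14 (n m : ℕ) (hn : 1 ≤ n) (hm : 1 ≤ m)
    (f : Fin (m + 1) → ℝ → ℝ) (hf : Trop.IsHoloCurveRep n f)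
    (hred : Trop.ReducedRep f) (hnc : Trop.NonConstantCurve f) :
    ∀ i l : Fin (m + 1), ∃ C : ℝ, ∀ᶠ r in Filter.atTop,
      Trop.Tchar n r (fun x => f i x - f l x) ≤ Trop.TCartan f r + C := by
  obtain ⟨d, hent, hsup⟩ := hf
  intro i l
  refine ⟨Trop.Fmax f 0 - f l 0, ?_⟩
  filter_upwards [Filter.eventually_gt_atTop (0 : ℝ)] with r hr
  obtain ⟨xi, pi, hPWi⟩ := pw_of _ _ (hent i).1
  obtain ⟨xl, pl, hPWl⟩ := pw_of _ _ (hent l).1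
  have hdl : d l ≤ n := hsup ▸ Finset.le_sup (Finset.mem_univ l)
  have hjen := hPWl.jensen hdl (hent l).2 hr
  have hpole : ∑ j ∈ Finset.Icc 1 n, Trop.Npole j r (fun x => f i x - f l x)
      ≤ ∑ j ∈ Finset.Icc 1 n, Trop.Nroot j r (f l) := by
    refine Finset.sum_le_sum fun j hj => ?_
    refine npole_le_nroot (Finset.mem_Icc.1 hj).1 hr (hent i).2 (hent l).2
      (fun z => ⟨hPWi.exists_rightPiece z, hPWl.exists_rightPiece z,
        hPWi.exists_leftPiece z, hPWl.exists_leftPiece z⟩)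
      (hPWl.omega_support_finite r j)
  have hFmax : ∀ (kk : Fin (m + 1)) (t : ℝ), f kk t ≤ Trop.Fmax f t := fun kk t =>
    le_ciSup (Set.Finite.bddAbove (Set.finite_range (fun u : Fin (m + 1) => f u t))) kk
  have hm1 : max (f i r - f l r) 0 ≤ Trop.Fmax f r - f l r :=
    max_le (by linarith [hFmax i r]) (by linarith [hFmax l r])
  have hm2 : max (f i (-r) - f l (-r)) 0 ≤ Trop.Fmax f (-r) - f l (-r) :=
    max_le (by linarith [hFmax i (-r)]) (by linarith [hFmax l (-r)])
  have hF0 : f l 0 ≤ Trop.Fmax f 0 := hFmax l 0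
  have hTchar : Trop.Tchar n r (fun x => f i x - f l x)
      = (max (f i r - f l r) 0 + max (f i (-r) - f l (-r)) 0) / 2
        + ∑ j ∈ Finset.Icc 1 n, Trop.Npole j r (fun x => f i x - f l x) := rfl
  have hTC : Trop.TCartan f r = (Trop.Fmax f r + Trop.Fmax f (-r)) / 2 - Trop.Fmax f 0 := rfl
  rw [hTchar, hTC]
  linarith

end MainProof
end

section
/- (n-th second main theorem with a tropical homogeneous polynomial) Let n, m ≥ 1 and let f : ℝ → TP^m be a non-constant n-th tropical holomorphic curve with reduced representation (f_0,…,f_m). Let P be a tropical homogeneous polynomial of degree d > 0 of the form P(x) = max{ max_{0≤k≤m} (α_k + d·x_k), max_{(i_0,…,i_m): Σ i_k = d, all i_k < d} (α_{i_0,…,i_m} + Σ_k i_k x_k) }, where all α_k ∈ ℝ and α_{i_0,…,i_m} ∈ ℝ∪{−∞}. Then T_f(r) = (1/d) ( Σ_{j=1}^{n} N^{(j)}(r, 1_0 ⊘ (P∘f)) − Σ_{j=1}^{n} N^{(j)}(r, P∘f) ) + O(1) as r → ∞. -/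
open Filter MeasureTheory Asymptotics Polynomial
open scoped Classical

/-- The composition `P ∘ f` of a tropical homogeneous polynomial, given by the finite set `T`
of exponent tuples and the (real) coefficient function `c`, with the curve `f`. -/
noncomputable def Pof {m : ℕ} (f : Fin (m + 1) → ℝ → ℝ)
    (T : Finset (Fin (m + 1) → ℕ)) (hT : T.Nonempty)
    (c : (Fin (m + 1) → ℕ) → ℝ) (x : ℝ) : ℝ :=
  T.sup' hT fun v => c v + ∑ k, (v k : ℝ) * f k x

namespace TropAux

open Trop

/-! ### Basic lemmas about one-sided polynomial pieces -/

lemma isRightPiece_unique {g : ℝ → ℝ} {x : ℝ} {p q : Polynomial ℝ}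
    (hp : IsRightPiece g x p) (hq : IsRightPiece g x q) : p = q := by
  obtain ⟨ε, hε, hp⟩ := hp
  obtain ⟨δ, hδ, hq⟩ := hq
  by_contra hne
  have hfin : Set.Finite {y : ℝ | (p - q).IsRoot y} :=
    Polynomial.finite_setOf_isRoot (sub_ne_zero.mpr hne)
  have hsub : Set.Ico x (x + min ε δ) ⊆ {y : ℝ | (p - q).IsRoot y} := by
    intro y hy
    have h1 : y ∈ Set.Ico x (x + ε) := ⟨hy.1, lt_of_lt_of_le hy.2 (by simp [min_le_left])⟩
    have h2 : y ∈ Set.Ico x (x + δ) := ⟨hy.1, lt_of_lt_of_le hy.2 (by simp [min_le_right])⟩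
    have := (hp y h1).symm.trans (hq y h2)
    simp [Polynomial.IsRoot, this]
  exact (Set.Ico_infinite (by simp [lt_min hε hδ] : x < x + min ε δ)) (hfin.subset hsub)

lemma isLeftPiece_unique {g : ℝ → ℝ} {x : ℝ} {p q : Polynomial ℝ}
    (hp : IsLeftPiece g x p) (hq : IsLeftPiece g x q) : p = q := by
  obtain ⟨ε, hε, hp⟩ := hp
  obtain ⟨δ, hδ, hq⟩ := hq
  by_contra hne
  have hfin : Set.Finite {y : ℝ | (p - q).IsRoot y} :=
    Polynomial.finite_setOf_isRoot (sub_ne_zero.mpr hne)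
  have hsub : Set.Ioc (x - min ε δ) x ⊆ {y : ℝ | (p - q).IsRoot y} := by
    intro y hy
    have h1 : y ∈ Set.Ioc (x - ε) x := ⟨lt_of_le_of_lt (by linarith [min_le_left ε δ]) hy.1, hy.2⟩
    have h2 : y ∈ Set.Ioc (x - δ) x := ⟨lt_of_le_of_lt (by linarith [min_le_right ε δ]) hy.1, hy.2⟩
    have := (hp y h1).symm.trans (hq y h2)
    simp [Polynomial.IsRoot, this]
  exact (Set.Ioc_infinite (by simp [lt_min hε hδ] : x - min ε δ < x)) (hfin.subset hsub)

lemma rightPoly_eq_s15 {g : ℝ → ℝ} {x : ℝ} {p : Polynomial ℝ} (h : IsRightPiece g x p) :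
    rightPoly g x = p := by
  have hex : ∃ q, IsRightPiece g x q := ⟨p, h⟩
  rw [rightPoly, dif_pos hex]
  exact isRightPiece_unique hex.choose_spec h

lemma leftPoly_eq_s15 {g : ℝ → ℝ} {x : ℝ} {p : Polynomial ℝ} (h : IsLeftPiece g x p) :
    leftPoly g x = p := by
  have hex : ∃ q, IsLeftPiece g x q := ⟨p, h⟩
  rw [leftPoly, dif_pos hex]
  exact isLeftPiece_unique hex.choose_spec h

lemma omega_eq_zero_of_eq {g : ℝ → ℝ} {x : ℝ} (hx : x ≠ 0)
    (h : rightPoly g x = leftPoly g x) (j : ℕ) : omega g j x = 0 := by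
  have hsgn : sgnR x = sgnL x := by
    rcases lt_trichotomy x 0 with h1 | h1 | h1
    · simp [sgnR, sgnL, h1, not_lt.mpr h1.le]
    · exact absurd h1 hx
    · simp [sgnR, sgnL, h1, not_lt.mpr h1.le]
  unfold omega rderiv lderiv
  rw [h, hsgn, sub_self, zero_div]

/-! ### Locating points in a ℤ-indexed partition -/

lemma locate_right {x : ℤ → ℝ} (hm : StrictMono x) (htop : Tendsto x atTop atTop)
    (hbot : Tendsto x atBot atBot) (t : ℝ) : ∃ i : ℤ, x (i - 1) ≤ t ∧ t < x i := by
  have h1 : ∃ i, t < x i := (htop.eventually_gt_atTop t).exists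
  have h2 : ∃ b : ℤ, ∀ z, t < x z → b ≤ z := by
    obtain ⟨j, hj⟩ := (hbot.eventually_lt_atBot t).exists
    exact ⟨j, fun z hz => le_of_lt (hm.lt_iff_lt.mp (hj.trans hz))⟩
  obtain ⟨b, hb⟩ := h2
  obtain ⟨i, hi, hleast⟩ := Int.exists_least_of_bdd ⟨b, hb⟩ h1
  refine ⟨i, ?_, hi⟩
  by_contra hc
  push_neg at hc
  have := hleast _ hc
  omega

lemma locate_left {x : ℤ → ℝ} (hm : StrictMono x) (htop : Tendsto x atTop atTop)
    (hbot : Tendsto x atBot atBot) (t : ℝ) : ∃ i : ℤ, x (i - 1) < t ∧ t ≤ x i := by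
  have h1 : ∃ i, t ≤ x i := ((htop.eventually_gt_atTop t).exists).imp (fun i hi => hi.le)
  have h2 : ∃ b : ℤ, ∀ z, t ≤ x z → b ≤ z := by
    obtain ⟨j, hj⟩ := (hbot.eventually_lt_atBot t).exists
    exact ⟨j, fun z hz => le_of_lt (hm.lt_iff_lt.mp (lt_of_lt_of_le hj hz))⟩
  obtain ⟨b, hb⟩ := h2
  obtain ⟨i, hi, hleast⟩ := Int.exists_least_of_bdd ⟨b, hb⟩ h1
  refine ⟨i, ?_, hi⟩
  by_contra hc
  push_neg at hc
  have := hleast _ hc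
  omega

lemma pieces_of_piecewise {N : ℕ} {f : ℝ → ℝ} (h : IsNthPiecewisePoly N f) (t : ℝ) :
    (∃ p : Polynomial ℝ, IsRightPiece f t p ∧ p.natDegree ≤ N) ∧
    (∃ p : Polynomial ℝ, IsLeftPiece f t p ∧ p.natDegree ≤ N) := by
  obtain ⟨-, x, p, hm, htop, hbot, hagree, hdeg, -⟩ := h
  constructor
  · obtain ⟨i, h1, h2⟩ := locate_right hm htop hbot t
    refine ⟨p i, ⟨x i - t, by linarith, fun y hy => ?_⟩, hdeg i⟩
    refine hagree i y ⟨le_trans h1 hy.1, ?_⟩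
    have := hy.2
    linarith
  · obtain ⟨i, h1, h2⟩ := locate_left hm htop hbot t
    refine ⟨p i, ⟨t - x (i - 1), by linarith, fun y hy => ?_⟩, hdeg i⟩
    refine hagree i y ⟨?_, le_trans hy.2 h2⟩
    have := hy.1
    linarith

/-! ### Local structure of a max of finitely many polynomials -/

lemma no_roots_right {q : Polynomial ℝ} (hq : q ≠ 0) (t : ℝ) :
    ∃ δ > (0 : ℝ), ∀ y ∈ Set.Ioo t (t + δ), ¬ q.IsRoot y := by
  classical
  have hfin := Polynomial.finite_setOf_isRoot hq
  set R : Finset ℝ := hfin.toFinset.filter (fun y => t < y) with hR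
  by_cases hne : R.Nonempty
  · refine ⟨R.min' hne - t, ?_, fun y hy hroot => ?_⟩
    · have : t < R.min' hne := (Finset.mem_filter.mp (R.min'_mem hne)).2
      linarith
    · have hyR : y ∈ R := Finset.mem_filter.mpr ⟨hfin.mem_toFinset.mpr hroot, hy.1⟩
      have := R.min'_le y hyR
      have := hy.2
      linarith
  · exact ⟨1, one_pos, fun y hy hroot => hne ⟨y, Finset.mem_filter.mpr ⟨hfin.mem_toFinset.mpr hroot, hy.1⟩⟩⟩

lemma no_roots_left {q : Polynomial ℝ} (hq : q ≠ 0) (t : ℝ) :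
    ∃ δ > (0 : ℝ), ∀ y ∈ Set.Ioo (t - δ) t, ¬ q.IsRoot y := by
  classical
  have hfin := Polynomial.finite_setOf_isRoot hq
  set R : Finset ℝ := hfin.toFinset.filter (fun y => y < t) with hR
  by_cases hne : R.Nonempty
  · refine ⟨t - R.max' hne, ?_, fun y hy hroot => ?_⟩
    · have : R.max' hne < t := (Finset.mem_filter.mp (R.max'_mem hne)).2
      linarith
    · have hyR : y ∈ R := Finset.mem_filter.mpr ⟨hfin.mem_toFinset.mpr hroot, hy.2⟩
      have := R.le_max' y hyR
      have := hy.1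
      linarith
  · exact ⟨1, one_pos, fun y hy hroot => hne ⟨y, Finset.mem_filter.mpr ⟨hfin.mem_toFinset.mpr hroot, hy.2⟩⟩⟩

lemma max_polys_right {ι : Type*} [DecidableEq ι] (T : Finset ι) (hT : T.Nonempty)
    (P : ι → Polynomial ℝ) (t : ℝ) :
    ∃ v₀ ∈ T, ∃ δ > (0 : ℝ), ∀ y ∈ Set.Ico t (t + δ),
      (T.sup' hT fun v => (P v).eval y) = (P v₀).eval y := by
  classical
  set Q : Polynomial ℝ :=
    ∏ vw ∈ (T ×ˢ T).filter (fun vw => P vw.1 ≠ P vw.2), (P vw.1 - P vw.2) with hQdef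
  have hQ0 : Q ≠ 0 :=
    Finset.prod_ne_zero_iff.mpr fun vw hvw => sub_ne_zero.mpr (Finset.mem_filter.mp hvw).2
  obtain ⟨δ, hδ, hroot⟩ := no_roots_right hQ0 t
  have hsmem : t + δ / 2 ∈ Set.Ioo t (t + δ) := ⟨by linarith, by linarith⟩
  obtain ⟨v₀, hv₀T, hv₀⟩ := T.exists_max_image (fun v => (P v).eval (t + δ / 2)) hT
  have key : ∀ y ∈ Set.Ioo t (t + δ), ∀ v ∈ T, (P v).eval y ≤ (P v₀).eval y := by
    intro y hy v hvT
    by_cases hPeq : P v = P v₀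
    · rw [hPeq]
    · have hno : ∀ z ∈ Set.Ioo t (t + δ), (P v₀ - P v).eval z ≠ 0 := by
        intro z hz h0
        refine hroot z hz ?_
        have hmem : (v₀, v) ∈ (T ×ˢ T).filter (fun vw => P vw.1 ≠ P vw.2) :=
          Finset.mem_filter.mpr ⟨Finset.mem_product.mpr ⟨hv₀T, hvT⟩, fun he => hPeq he.symm⟩
        show Q.IsRoot z
        rw [hQdef, Polynomial.IsRoot, Polynomial.eval_prod]
        exact Finset.prod_eq_zero hmem h0
      have hs_pos : 0 < (P v₀ - P v).eval (t + δ / 2) := by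
        rcases (hno _ hsmem).lt_or_gt with h | h
        · exfalso
          have := hv₀ v hvT
          rw [Polynomial.eval_sub] at h
          linarith
        · exact h
      by_contra hlt
      push_neg at hlt
      have hy_neg : (P v₀ - P v).eval y < 0 := by
        rw [Polynomial.eval_sub]; linarith
      have hcont : ContinuousOn (fun z => (P v₀ - P v).eval z) (Set.uIcc y (t + δ / 2)) :=
        (Polynomial.continuous _).continuousOn
      have h0mem : (0 : ℝ) ∈ Set.uIcc ((P v₀ - P v).eval y) ((P v₀ - P v).eval (t + δ / 2)) :=
        Set.mem_uIcc.mpr (Or.inl ⟨hy_neg.le, hs_pos.le⟩)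
      obtain ⟨z, hz, hz0⟩ := intermediate_value_uIcc hcont h0mem
      exact hno z (Set.ordConnected_Ioo.uIcc_subset hy hsmem hz) hz0
  refine ⟨v₀, hv₀T, δ, hδ, fun y hy => ?_⟩
  have hall : ∀ v ∈ T, (P v).eval y ≤ (P v₀).eval y := by
    rcases eq_or_lt_of_le hy.1 with heq | hty
    · intro v hvT
      subst heq
      have hconv : Tendsto (fun z => (P v₀ - P v).eval z) (nhdsWithin t (Set.Ioo t (t + δ)))
          (nhds ((P v₀ - P v).eval t)) :=
        ((Polynomial.continuous _).tendsto t).mono_left nhdsWithin_le_nhds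
      haveI : (nhdsWithin t (Set.Ioo t (t + δ))).NeBot := by
        refine mem_closure_iff_nhdsWithin_neBot.mp ?_
        rw [closure_Ioo (by linarith : t ≠ t + δ)]
        exact ⟨le_refl t, by linarith⟩
      have h0 : 0 ≤ (P v₀ - P v).eval t := by
        refine ge_of_tendsto hconv ?_
        refine eventually_nhdsWithin_of_forall (fun z hz => ?_)
        rw [Polynomial.eval_sub, sub_nonneg]
        exact key z hz v hvT
      rw [Polynomial.eval_sub, sub_nonneg] at h0
      exact h0
    · exact fun v hv => key y ⟨hty, hy.2⟩ v hv
  exact le_antisymm (Finset.sup'_le _ _ hall) (Finset.le_sup' (fun v => (P v).eval y) hv₀T)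

lemma max_polys_left {ι : Type*} [DecidableEq ι] (T : Finset ι) (hT : T.Nonempty)
    (P : ι → Polynomial ℝ) (t : ℝ) :
    ∃ v₀ ∈ T, ∃ δ > (0 : ℝ), ∀ y ∈ Set.Ioc (t - δ) t,
      (T.sup' hT fun v => (P v).eval y) = (P v₀).eval y := by
  classical
  set Q : Polynomial ℝ :=
    ∏ vw ∈ (T ×ˢ T).filter (fun vw => P vw.1 ≠ P vw.2), (P vw.1 - P vw.2) with hQdef
  have hQ0 : Q ≠ 0 :=
    Finset.prod_ne_zero_iff.mpr fun vw hvw => sub_ne_zero.mpr (Finset.mem_filter.mp hvw).2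
  obtain ⟨δ, hδ, hroot⟩ := no_roots_left hQ0 t
  have hsmem : t - δ / 2 ∈ Set.Ioo (t - δ) t := ⟨by linarith, by linarith⟩
  obtain ⟨v₀, hv₀T, hv₀⟩ := T.exists_max_image (fun v => (P v).eval (t - δ / 2)) hT
  have key : ∀ y ∈ Set.Ioo (t - δ) t, ∀ v ∈ T, (P v).eval y ≤ (P v₀).eval y := by
    intro y hy v hvT
    by_cases hPeq : P v = P v₀
    · rw [hPeq]
    · have hno : ∀ z ∈ Set.Ioo (t - δ) t, (P v₀ - P v).eval z ≠ 0 := by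
        intro z hz h0
        refine hroot z hz ?_
        have hmem : (v₀, v) ∈ (T ×ˢ T).filter (fun vw => P vw.1 ≠ P vw.2) :=
          Finset.mem_filter.mpr ⟨Finset.mem_product.mpr ⟨hv₀T, hvT⟩, fun he => hPeq he.symm⟩
        show Q.IsRoot z
        rw [hQdef, Polynomial.IsRoot, Polynomial.eval_prod]
        exact Finset.prod_eq_zero hmem h0
      have hs_pos : 0 < (P v₀ - P v).eval (t - δ / 2) := by
        rcases (hno _ hsmem).lt_or_gt with h | h
        · exfalso
          have := hv₀ v hvT
          rw [Polynomial.eval_sub] at h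
          linarith
        · exact h
      by_contra hlt
      push_neg at hlt
      have hy_neg : (P v₀ - P v).eval y < 0 := by
        rw [Polynomial.eval_sub]; linarith
      have hcont : ContinuousOn (fun z => (P v₀ - P v).eval z) (Set.uIcc y (t - δ / 2)) :=
        (Polynomial.continuous _).continuousOn
      have h0mem : (0 : ℝ) ∈ Set.uIcc ((P v₀ - P v).eval y) ((P v₀ - P v).eval (t - δ / 2)) :=
        Set.mem_uIcc.mpr (Or.inl ⟨hy_neg.le, hs_pos.le⟩)
      obtain ⟨z, hz, hz0⟩ := intermediate_value_uIcc hcont h0mem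
      exact hno z (Set.ordConnected_Ioo.uIcc_subset hy hsmem hz) hz0
  refine ⟨v₀, hv₀T, δ, hδ, fun y hy => ?_⟩
  have hall : ∀ v ∈ T, (P v).eval y ≤ (P v₀).eval y := by
    rcases eq_or_lt_of_le hy.2 with heq | hty
    · intro v hvT
      subst heq
      have hconv : Tendsto (fun z => (P v₀ - P v).eval z) (nhdsWithin y (Set.Ioo (y - δ) y))
          (nhds ((P v₀ - P v).eval y)) :=
        ((Polynomial.continuous _).tendsto y).mono_left nhdsWithin_le_nhds
      haveI : (nhdsWithin y (Set.Ioo (y - δ) y)).NeBot := by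
        refine mem_closure_iff_nhdsWithin_neBot.mp ?_
        rw [closure_Ioo (by linarith : y - δ ≠ y)]
        exact ⟨by linarith, le_refl y⟩
      have h0 : 0 ≤ (P v₀ - P v).eval y := by
        refine ge_of_tendsto hconv ?_
        refine eventually_nhdsWithin_of_forall (fun z hz => ?_)
        rw [Polynomial.eval_sub, sub_nonneg]
        exact key z hz v hvT
      rw [Polynomial.eval_sub, sub_nonneg] at h0
      exact h0
    · exact fun v hv => key y ⟨hy.1, hty⟩ v hv
  exact le_antisymm (Finset.sup'_le _ _ hall) (Finset.le_sup' (fun v => (P v).eval y) hv₀T)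

/-! ### One-sided pieces of `P ∘ f` -/

lemma Pof_pieces {m n : ℕ} (f : Fin (m + 1) → ℝ → ℝ)
    (hpieces : ∀ (k : Fin (m + 1)) (t : ℝ),
      (∃ p, IsRightPiece (f k) t p ∧ p.natDegree ≤ n) ∧
      (∃ p, IsLeftPiece (f k) t p ∧ p.natDegree ≤ n))
    (T : Finset (Fin (m + 1) → ℕ)) (hT : T.Nonempty) (c : (Fin (m + 1) → ℕ) → ℝ) (t : ℝ) :
    (∃ p, IsRightPiece (Pof f T hT c) t p ∧ p.natDegree ≤ n) ∧
    (∃ p, IsLeftPiece (Pof f T hT c) t p ∧ p.natDegree ≤ n) := by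
  classical
  constructor
  · choose p hp hdegp using fun k => (hpieces k t).1
    choose ε hε hagree using hp
    set Pv : (Fin (m + 1) → ℕ) → Polynomial ℝ :=
      fun v => Polynomial.C (c v) + ∑ k, Polynomial.C ((v k : ℝ)) * p k with hPv
    have hdegPv : ∀ v, (Pv v).natDegree ≤ n := by
      intro v
      refine le_trans (Polynomial.natDegree_add_le _ _) (max_le (by simp) ?_)
      exact Polynomial.natDegree_sum_le_of_forall_le _ _
        (fun k _ => le_trans (Polynomial.natDegree_C_mul_le _ _) (hdegp k))
    set ε₀ : ℝ := Finset.univ.inf' Finset.univ_nonempty ε with hε₀def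
    have hε₀pos : 0 < ε₀ := by
      rw [hε₀def, Finset.lt_inf'_iff]
      exact fun k _ => hε k
    have hε₀le : ∀ k, ε₀ ≤ ε k := fun k => Finset.inf'_le _ (Finset.mem_univ k)
    have hloc : ∀ y ∈ Set.Ico t (t + ε₀),
        Pof f T hT c y = T.sup' hT fun v => (Pv v).eval y := by
      intro y hy
      refine Finset.sup'_congr hT rfl (fun v hv => ?_)
      rw [hPv]
      simp only [Polynomial.eval_add, Polynomial.eval_C, Polynomial.eval_finset_sum,
        Polynomial.eval_mul]
      congr 1
      refine Finset.sum_congr rfl (fun k _ => ?_)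
      rw [hagree k y ⟨hy.1, lt_of_lt_of_le hy.2 (by linarith [hε₀le k])⟩]
    obtain ⟨v₀, hv₀T, δ, hδ, hmax⟩ := max_polys_right T hT Pv t
    refine ⟨Pv v₀, ⟨min ε₀ δ, lt_min hε₀pos hδ, fun y hy => ?_⟩, hdegPv v₀⟩
    rw [hloc y ⟨hy.1, lt_of_lt_of_le hy.2 (by linarith [min_le_left ε₀ δ])⟩]
    exact hmax y ⟨hy.1, lt_of_lt_of_le hy.2 (by linarith [min_le_right ε₀ δ])⟩
  · choose p hp hdegp using fun k => (hpieces k t).2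
    choose ε hε hagree using hp
    set Pv : (Fin (m + 1) → ℕ) → Polynomial ℝ :=
      fun v => Polynomial.C (c v) + ∑ k, Polynomial.C ((v k : ℝ)) * p k with hPv
    have hdegPv : ∀ v, (Pv v).natDegree ≤ n := by
      intro v
      refine le_trans (Polynomial.natDegree_add_le _ _) (max_le (by simp) ?_)
      exact Polynomial.natDegree_sum_le_of_forall_le _ _
        (fun k _ => le_trans (Polynomial.natDegree_C_mul_le _ _) (hdegp k))
    set ε₀ : ℝ := Finset.univ.inf' Finset.univ_nonempty ε with hε₀def
    have hε₀pos : 0 < ε₀ := by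
      rw [hε₀def, Finset.lt_inf'_iff]
      exact fun k _ => hε k
    have hε₀le : ∀ k, ε₀ ≤ ε k := fun k => Finset.inf'_le _ (Finset.mem_univ k)
    have hloc : ∀ y ∈ Set.Ioc (t - ε₀) t,
        Pof f T hT c y = T.sup' hT fun v => (Pv v).eval y := by
      intro y hy
      refine Finset.sup'_congr hT rfl (fun v hv => ?_)
      rw [hPv]
      simp only [Polynomial.eval_add, Polynomial.eval_C, Polynomial.eval_finset_sum,
        Polynomial.eval_mul]
      congr 1
      refine Finset.sum_congr rfl (fun k _ => ?_)
      rw [hagree k y ⟨lt_of_le_of_lt (by linarith [hε₀le k]) hy.1, hy.2⟩]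
    obtain ⟨v₀, hv₀T, δ, hδ, hmax⟩ := max_polys_left T hT Pv t
    refine ⟨Pv v₀, ⟨min ε₀ δ, lt_min hε₀pos hδ, fun y hy => ?_⟩, hdegPv v₀⟩
    rw [hloc y ⟨lt_of_le_of_lt (by linarith [min_le_left ε₀ δ]) hy.1, hy.2⟩]
    exact hmax y ⟨lt_of_le_of_lt (by linarith [min_le_right ε₀ δ]) hy.1, hy.2⟩

/-! ### Partitions of a compact interval into polynomial pieces -/

def PartitionOn (n : ℕ) (g : ℝ → ℝ) (a b : ℝ) : Prop :=
  ∃ k : ℕ, ∃ t : ℕ → ℝ, ∃ q : ℕ → Polynomial ℝ,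
    t 0 = a ∧ t k = b ∧ (∀ i < k, t i < t (i + 1)) ∧
    (∀ i < k, ∀ y ∈ Set.Icc (t i) (t (i + 1)), g y = (q i).eval y) ∧
    (∀ i < k, (q i).natDegree ≤ n)

lemma partitionOn_refl {n : ℕ} {g : ℝ → ℝ} {a : ℝ} : PartitionOn n g a a :=
  ⟨0, fun _ => a, fun _ => 0, rfl, rfl, fun i hi => absurd hi (Nat.not_lt_zero i),
    fun i hi => absurd hi (Nat.not_lt_zero i), fun i hi => absurd hi (Nat.not_lt_zero i)⟩

lemma PartitionOn.append {n : ℕ} {g : ℝ → ℝ} {a x s : ℝ} (h : PartitionOn n g a x)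
    (hxs : x < s) (p : Polynomial ℝ) (hdeg : p.natDegree ≤ n)
    (hag : ∀ y ∈ Set.Icc x s, g y = p.eval y) : PartitionOn n g a s := by
  obtain ⟨k, t, q, h0, hk, hmono, hagr, hdq⟩ := h
  refine ⟨k + 1, fun i => if i ≤ k then t i else s, fun i => if i < k then q i else p,
    ?_, ?_, ?_, ?_, ?_⟩
  · simpa using h0
  · simp
  · intro i hi
    by_cases hik : i < k
    · simp only [if_pos hik.le, if_pos (Nat.succ_le_of_lt hik)]
      exact hmono i hik
    · have hik' : i = k := by omega
      subst hik'
      simp only [le_refl, if_pos, if_neg (by omega : ¬ i + 1 ≤ i)]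
      rw [hk]
      exact hxs
  · intro i hi y hy
    by_cases hik : i < k
    · simp only [if_pos hik.le, if_pos (Nat.succ_le_of_lt hik), if_pos hik] at hy ⊢
      exact hagr i hik y hy
    · have hik' : i = k := by omega
      subst hik'
      simp only [le_refl, if_pos, if_neg (by omega : ¬ i + 1 ≤ i), if_neg (lt_irrefl i)] at hy ⊢
      exact hag y (by rwa [hk] at hy)
  · intro i hi
    by_cases hik : i < k
    · simpa [hik] using hdq i hik
    · simpa [hik] using hdeg

lemma exists_partition {n : ℕ} {g : ℝ → ℝ}
    (hR : ∀ t, ∃ p, IsRightPiece g t p ∧ p.natDegree ≤ n)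
    (hL : ∀ t, ∃ p, IsLeftPiece g t p ∧ p.natDegree ≤ n)
    {a b : ℝ} (hab : a ≤ b) : PartitionOn n g a b := by
  rcases eq_or_lt_of_le hab with rfl | hab
  · exact partitionOn_refl
  set A := {x : ℝ | x ∈ Set.Icc a b ∧ PartitionOn n g a x} with hA
  have haA : a ∈ A := ⟨⟨le_refl a, hab.le⟩, partitionOn_refl⟩
  have hbdd : BddAbove A := ⟨b, fun x hx => hx.1.2⟩
  have hne : A.Nonempty := ⟨a, haA⟩
  set s := sSup A with hs
  have hsa : a ≤ s := le_csSup hbdd haA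
  have hsb : s ≤ b := csSup_le hne fun x hx => hx.1.2
  have hsA : PartitionOn n g a s := by
    rcases eq_or_lt_of_le hsa with heq | hlt
    · rw [← heq]; exact partitionOn_refl
    · obtain ⟨p, ⟨ε, hε, hagL⟩, hdegp⟩ := hL s
      obtain ⟨x, hxA, hxgt⟩ := exists_lt_of_lt_csSup hne
        (show s - min ε (s - a) < s by
          have := lt_min hε (by linarith : (0:ℝ) < s - a); linarith)
      have hxs : x ≤ s := le_csSup hbdd hxA
      rcases eq_or_lt_of_le hxs with heq2 | hlt2
      · exact heq2 ▸ hxA.2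
      · refine hxA.2.append hlt2 p hdegp fun y hy => hagL y ⟨?_, hy.2⟩
        have h1 : s - ε ≤ s - min ε (s - a) := by
          have := min_le_left ε (s - a); linarith
        have := hy.1
        linarith
  rcases eq_or_lt_of_le hsb with heq | hlt
  · rwa [heq] at hsA
  · exfalso
    obtain ⟨p, ⟨ε, hε, hagR⟩, hdegp⟩ := hR s
    set s' := min (s + ε / 2) b with hs'
    have hs's : s < s' := lt_min (by linarith) hlt
    have hs'A : s' ∈ A := by
      refine ⟨⟨hsa.trans hs's.le, min_le_right _ _⟩, hsA.append hs's p hdegp fun y hy => ?_⟩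
      refine hagR y ⟨hy.1, ?_⟩
      have h1 : s' ≤ s + ε / 2 := min_le_left _ _
      have := hy.2
      linarith
    have := le_csSup hbdd hs'A
    linarith

lemma part_mono {k : ℕ} {t : ℕ → ℝ} (h : ∀ i < k, t i < t (i + 1)) :
    ∀ {i j : ℕ}, i ≤ j → j ≤ k → t i ≤ t j := by
  intro i j hij hjk
  induction j with
  | zero =>
    have : i = 0 := by omega
    simp [this]
  | succ j ih =>
    rcases Nat.lt_or_ge i (j + 1) with h1 | h1
    · exact le_trans (ih (by omega) (by omega)) (h j (by omega)).le
    · have : i = j + 1 := by omega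
      simp [this]

lemma part_strict {k : ℕ} {t : ℕ → ℝ} (h : ∀ i < k, t i < t (i + 1)) :
    ∀ {i j : ℕ}, i < j → j ≤ k → t i < t j := by
  intro i j hij hjk
  have h1 : t i ≤ t (j - 1) := part_mono h (by omega) (by omega)
  have h2 : t (j - 1) < t ((j - 1) + 1) := h (j - 1) (by omega)
  have h3 : (j - 1) + 1 = j := by omega
  rw [h3] at h2
  linarith

/-! ### Taylor coefficients and one-sided derivatives -/

lemma rderiv_taylor (g : ℝ → ℝ) (j : ℕ) (z : ℝ) :
    rderiv g j z = (j.factorial : ℝ) * (Polynomial.taylor z (rightPoly g z)).coeff j := by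
  rw [Polynomial.taylor_coeff, rderiv]
  show (Polynomial.derivative^[j] (rightPoly g z)).eval z = _
  rw [← Polynomial.factorial_smul_hasseDeriv]
  show ((j.factorial • Polynomial.hasseDeriv j) (rightPoly g z)).eval z = _
  rw [LinearMap.smul_apply, nsmul_eq_mul]
  push_cast
  rw [Polynomial.eval_mul, Polynomial.eval_natCast]

lemma lderiv_taylor (g : ℝ → ℝ) (j : ℕ) (z : ℝ) :
    lderiv g j z = (j.factorial : ℝ) * (Polynomial.taylor z (leftPoly g z)).coeff j := by
  rw [Polynomial.taylor_coeff, lderiv]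
  show (Polynomial.derivative^[j] (leftPoly g z)).eval z = _
  rw [← Polynomial.factorial_smul_hasseDeriv]
  show ((j.factorial • Polynomial.hasseDeriv j) (leftPoly g z)).eval z = _
  rw [LinearMap.smul_apply, nsmul_eq_mul]
  push_cast
  rw [Polynomial.eval_mul, Polynomial.eval_natCast]

lemma fact_ne_zero' (j : ℕ) : (j.factorial : ℝ) ≠ 0 :=
  Nat.cast_ne_zero.mpr j.factorial_ne_zero

lemma omega_pos_eq (g : ℝ → ℝ) {z : ℝ} (hz : 0 < z) (j : ℕ) :
    omega g j z = (Polynomial.taylor z (rightPoly g z)).coeff j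
      - (Polynomial.taylor z (leftPoly g z)).coeff j := by
  unfold omega sgnR sgnL
  rw [if_neg (by linarith), if_pos hz, rderiv_taylor, lderiv_taylor, one_pow]
  field_simp [fact_ne_zero' j]

lemma omega_neg_eq (g : ℝ → ℝ) {z : ℝ} (hz : z < 0) (j : ℕ) :
    omega g j z = (-1 : ℝ) ^ (j + 1) * ((Polynomial.taylor z (rightPoly g z)).coeff j
      - (Polynomial.taylor z (leftPoly g z)).coeff j) := by
  unfold omega sgnR sgnL
  rw [if_pos hz, if_neg (by linarith), rderiv_taylor, lderiv_taylor]
  field_simp [fact_ne_zero' j]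

lemma omega_zero_eq (g : ℝ → ℝ) (j : ℕ) :
    omega g j 0 = (rightPoly g 0).coeff j + (-1 : ℝ) ^ j * (leftPoly g 0).coeff j := by
  unfold omega sgnR sgnL
  rw [if_neg (lt_irrefl 0), if_neg (lt_irrefl 0), rderiv_taylor, lderiv_taylor,
    Polynomial.taylor_zero, Polynomial.taylor_zero, one_pow]
  field_simp [fact_ne_zero' j]
  ring

lemma taylor_expand_s15 {n : ℕ} (p : Polynomial ℝ) (hdeg : p.natDegree ≤ n) (z x : ℝ) :
    p.eval x = p.eval z
      + ∑ j ∈ Finset.Icc 1 n, (Polynomial.taylor z p).coeff j * (x - z) ^ j := by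
  conv_lhs => rw [← Polynomial.taylor_eval_sub z p x]
  rw [Polynomial.eval_eq_sum_range' (n := n + 1)
    (by rw [Polynomial.natDegree_taylor]; omega) (x - z)]
  have hins : Finset.range (n + 1) = insert 0 (Finset.Icc 1 n) := by
    ext i
    simp only [Finset.mem_range, Finset.mem_insert, Finset.mem_Icc]
    omega
  rw [hins, Finset.sum_insert (by simp)]
  rw [Polynomial.taylor_coeff_zero]
  simp

/-! ### Per-node identities -/

lemma node_pos {n : ℕ} (g : ℝ → ℝ) {z r : ℝ} (hz : 0 < z) {A B : Polynomial ℝ}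
    (hA : rightPoly g z = A) (hB : leftPoly g z = B)
    (hdA : A.natDegree ≤ n) (hdB : B.natDegree ≤ n) (hcont : A.eval z = B.eval z) :
    ∑ j ∈ Finset.Icc 1 n, omega g j z * (r - |z|) ^ j = A.eval r - B.eval r := by
  have habs : |z| = z := abs_of_pos hz
  have h1 : ∑ j ∈ Finset.Icc 1 n, omega g j z * (r - |z|) ^ j
      = (∑ j ∈ Finset.Icc 1 n, (Polynomial.taylor z A).coeff j * (r - z) ^ j)
        - ∑ j ∈ Finset.Icc 1 n, (Polynomial.taylor z B).coeff j * (r - z) ^ j := by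
    rw [← Finset.sum_sub_distrib]
    refine Finset.sum_congr rfl fun j hj => ?_
    rw [omega_pos_eq g hz j, hA, hB, habs]
    ring
  have eA := taylor_expand_s15 A hdA z r
  have eB := taylor_expand_s15 B hdB z r
  rw [h1]
  linarith

lemma node_neg {n : ℕ} (g : ℝ → ℝ) {z r : ℝ} (hz : z < 0) {A B : Polynomial ℝ}
    (hA : rightPoly g z = A) (hB : leftPoly g z = B)
    (hdA : A.natDegree ≤ n) (hdB : B.natDegree ≤ n) (hcont : A.eval z = B.eval z) :
    ∑ j ∈ Finset.Icc 1 n, omega g j z * (r - |z|) ^ j = B.eval (-r) - A.eval (-r) := by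
  have habs : |z| = -z := abs_of_neg hz
  have h1 : ∑ j ∈ Finset.Icc 1 n, omega g j z * (r - |z|) ^ j
      = (∑ j ∈ Finset.Icc 1 n, (Polynomial.taylor z B).coeff j * (-r - z) ^ j)
        - ∑ j ∈ Finset.Icc 1 n, (Polynomial.taylor z A).coeff j * (-r - z) ^ j := by
    rw [← Finset.sum_sub_distrib]
    refine Finset.sum_congr rfl fun j hj => ?_
    rw [omega_neg_eq g hz j, hA, hB, habs,
      show ((-r : ℝ) - z) = (-1) * (r - -z) from by ring, mul_pow]
    ring
  have eA := taylor_expand_s15 A hdA z (-r)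
  have eB := taylor_expand_s15 B hdB z (-r)
  rw [h1]
  linarith

lemma node_zero {n : ℕ} (g : ℝ → ℝ) (r : ℝ) {A B : Polynomial ℝ}
    (hA : rightPoly g 0 = A) (hB : leftPoly g 0 = B)
    (hdA : A.natDegree ≤ n) (hdB : B.natDegree ≤ n) (hcont : A.eval 0 = B.eval 0) :
    ∑ j ∈ Finset.Icc 1 n, omega g j 0 * (r - |(0:ℝ)|) ^ j
      = A.eval r + B.eval (-r) - 2 * A.eval 0 := by
  have h1 : ∑ j ∈ Finset.Icc 1 n, omega g j 0 * (r - |(0:ℝ)|) ^ j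
      = (∑ j ∈ Finset.Icc 1 n, (Polynomial.taylor (0:ℝ) A).coeff j * (r - 0) ^ j)
        + ∑ j ∈ Finset.Icc 1 n, (Polynomial.taylor (0:ℝ) B).coeff j * (-r - 0) ^ j := by
    rw [← Finset.sum_add_distrib]
    refine Finset.sum_congr rfl fun j hj => ?_
    rw [omega_zero_eq g j, abs_zero, hA, hB, Polynomial.taylor_zero, Polynomial.taylor_zero,
      show ((-r : ℝ) - 0) = (-1) * (r - 0) from by ring, mul_pow]
    ring
  have eA := taylor_expand_s15 A hdA 0 r
  have eB := taylor_expand_s15 B hdB 0 (-r)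
  rw [h1]
  linarith

/-! ### Reduction of the counting tsums to finite sums -/

lemma tsum_pred_eq_sum_filter {pred : ℝ → Prop} {S : Finset ℝ}
    (hsub : ∀ z, pred z → z ∈ S) (w : ℝ → ℝ) :
    ∑' z : {z : ℝ // pred z}, w z.1 = ∑ z ∈ S.filter pred, w z := by
  classical
  have h1 : ∑' z : {z : ℝ // pred z}, w z.1 = ∑' z : ℝ, Set.indicator {z | pred z} w z :=
    tsum_subtype _ _
  have h2 : ∀ b ∉ S.filter pred, Set.indicator {z | pred z} w b = 0 := fun b hb =>
    Set.indicator_of_notMem (fun hbp => hb (Finset.mem_filter.mpr ⟨hsub b hbp, hbp⟩)) w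
  rw [h1, tsum_eq_sum h2]
  exact Finset.sum_congr rfl fun z hz => Set.indicator_of_mem (Finset.mem_filter.mp hz).2 w

lemma locate_partition {k : ℕ} {t : ℕ → ℝ} (hm : ∀ i < k, t i < t (i + 1)) {z : ℝ}
    (h0 : t 0 ≤ z) (hk : z < t k) : ∃ l, l < k ∧ t l ≤ z ∧ z < t (l + 1) := by
  classical
  set l := Nat.findGreatest (fun i => t i ≤ z) k with hl
  have hspec : t l ≤ z :=
    Nat.findGreatest_spec (P := fun i => t i ≤ z) (Nat.zero_le k) h0
  have hlk : l ≤ k := Nat.findGreatest_le k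
  have hlk' : l < k := by
    rcases eq_or_lt_of_le hlk with heq | h
    · exfalso; rw [heq] at hspec; linarith
    · exact h
  refine ⟨l, hlk', hspec, ?_⟩
  by_contra h
  push_neg at h
  exact Nat.findGreatest_is_greatest (P := fun i => t i ≤ z)
    (by rw [← hl]; omega) (by omega) h

/-! ### The tropical Jensen formula -/

lemma jensen {n : ℕ} {g : ℝ → ℝ}
    (hR : ∀ t : ℝ, ∃ p, IsRightPiece g t p ∧ p.natDegree ≤ n)
    (hL : ∀ t : ℝ, ∃ p, IsLeftPiece g t p ∧ p.natDegree ≤ n)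
    {r : ℝ} (hr : 0 < r) :
    ∑ j ∈ Finset.Icc 1 n, (Nroot j r g - Npole j r g) = (g r + g (-r)) / 2 - g 0 := by
  classical
  obtain ⟨k₁, t₁, q₁, ht₁0, ht₁k, hm₁, hag₁, hd₁⟩ :=
    exists_partition hR hL (le_of_lt hr : (0:ℝ) ≤ r)
  obtain ⟨k₂, t₂, q₂, ht₂0, ht₂k, hm₂, hag₂, hd₂⟩ :=
    exists_partition hR hL (by linarith : (-r:ℝ) ≤ 0)
  obtain ⟨K₁, rfl⟩ : ∃ K, k₁ = K + 1 := by
    refine ⟨k₁ - 1, ?_⟩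
    have : k₁ ≠ 0 := fun h => by rw [h, ht₁0] at ht₁k; linarith
    omega
  obtain ⟨K₂, rfl⟩ : ∃ K, k₂ = K + 1 := by
    refine ⟨k₂ - 1, ?_⟩
    have : k₂ ≠ 0 := fun h => by rw [h, ht₂0] at ht₂k; linarith
    omega
  have hrp₁ : ∀ l, l < K₁ + 1 → rightPoly g (t₁ l) = q₁ l := by
    intro l hl
    refine rightPoly_eq_s15 ⟨t₁ (l+1) - t₁ l, sub_pos.mpr (hm₁ l hl), fun y hy => ?_⟩
    refine hag₁ l hl y ⟨hy.1, ?_⟩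
    have := hy.2; linarith
  have hlp₁ : ∀ l, l < K₁ + 1 → leftPoly g (t₁ (l+1)) = q₁ l := by
    intro l hl
    refine leftPoly_eq_s15 ⟨t₁ (l+1) - t₁ l, sub_pos.mpr (hm₁ l hl), fun y hy => ?_⟩
    refine hag₁ l hl y ⟨?_, hy.2⟩
    have := hy.1; linarith
  have hrp₂ : ∀ l, l < K₂ + 1 → rightPoly g (t₂ l) = q₂ l := by
    intro l hl
    refine rightPoly_eq_s15 ⟨t₂ (l+1) - t₂ l, sub_pos.mpr (hm₂ l hl), fun y hy => ?_⟩
    refine hag₂ l hl y ⟨hy.1, ?_⟩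
    have := hy.2; linarith
  have hlp₂ : ∀ l, l < K₂ + 1 → leftPoly g (t₂ (l+1)) = q₂ l := by
    intro l hl
    refine leftPoly_eq_s15 ⟨t₂ (l+1) - t₂ l, sub_pos.mpr (hm₂ l hl), fun y hy => ?_⟩
    refine hag₂ l hl y ⟨?_, hy.2⟩
    have := hy.1; linarith
  have hgr : g r = (q₁ K₁).eval r := by
    refine hag₁ K₁ (by omega) r ⟨?_, ?_⟩
    · rw [← ht₁k]; exact part_mono hm₁ (by omega) (by omega)
    · rw [ht₁k]
  have hg0 : g 0 = (q₁ 0).eval 0 := by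
    refine hag₁ 0 (by omega) 0 ⟨ht₁0.le, ?_⟩
    rw [← ht₁0]; exact (hm₁ 0 (by omega)).le
  have hgmr : g (-r) = (q₂ 0).eval (-r) := by
    refine hag₂ 0 (by omega) (-r) ⟨ht₂0.le, ?_⟩
    rw [← ht₂0]; exact (hm₂ 0 (by omega)).le
  have hg0' : g 0 = (q₂ K₂).eval 0 := by
    refine hag₂ K₂ (by omega) 0 ⟨?_, ht₂k.ge⟩
    rw [← ht₂k]; exact (hm₂ K₂ (by omega)).le
  have hrp0 : rightPoly g 0 = q₁ 0 := by rw [← ht₁0]; exact hrp₁ 0 (by omega)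
  have hlp0 : leftPoly g 0 = q₂ K₂ := by rw [← ht₂k]; exact hlp₂ K₂ (by omega)
  have hc₁ : ∀ l, l < K₁ + 1 → (q₁ l).eval (t₁ l) = g (t₁ l) :=
    fun l hl => (hag₁ l hl (t₁ l) ⟨le_refl _, (hm₁ l hl).le⟩).symm
  have hc₁' : ∀ l, l < K₁ + 1 → (q₁ l).eval (t₁ (l+1)) = g (t₁ (l+1)) :=
    fun l hl => (hag₁ l hl (t₁ (l+1)) ⟨(hm₁ l hl).le, le_refl _⟩).symm
  have hc₂ : ∀ l, l < K₂ + 1 → (q₂ l).eval (t₂ l) = g (t₂ l) :=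
    fun l hl => (hag₂ l hl (t₂ l) ⟨le_refl _, (hm₂ l hl).le⟩).symm
  have hc₂' : ∀ l, l < K₂ + 1 → (q₂ l).eval (t₂ (l+1)) = g (t₂ (l+1)) :=
    fun l hl => (hag₂ l hl (t₂ (l+1)) ⟨(hm₂ l hl).le, le_refl _⟩).symm
  have hpos₁ : ∀ l, 1 ≤ l → l ≤ K₁ → 0 < t₁ l ∧ t₁ l < r := by
    intro l h1 h2
    constructor
    · rw [← ht₁0]; exact part_strict hm₁ (by omega) (by omega)
    · rw [← ht₁k]; exact part_strict hm₁ (by omega) (by omega)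
  have hpos₂ : ∀ l, 1 ≤ l → l ≤ K₂ → -r < t₂ l ∧ t₂ l < 0 := by
    intro l h1 h2
    constructor
    · rw [← ht₂0]; exact part_strict hm₂ (by omega) (by omega)
    · rw [← ht₂k]; exact part_strict hm₂ (by omega) (by omega)
  set S : Finset ℝ :=
    insert 0 (((Finset.Icc 1 K₁).image t₁) ∪ ((Finset.Icc 1 K₂).image t₂)) with hS
  have hSIoo : ∀ z ∈ S, z ∈ Set.Ioo (-r) r := by
    intro z hz
    rw [hS, Finset.mem_insert, Finset.mem_union] at hz
    rcases hz with rfl | hz | hz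
    · exact ⟨by linarith, hr⟩
    · obtain ⟨l, hl, rfl⟩ := Finset.mem_image.mp hz
      rw [Finset.mem_Icc] at hl
      obtain ⟨h1, h2⟩ := hpos₁ l hl.1 hl.2
      exact ⟨by linarith, h2⟩
    · obtain ⟨l, hl, rfl⟩ := Finset.mem_image.mp hz
      rw [Finset.mem_Icc] at hl
      obtain ⟨h1, h2⟩ := hpos₂ l hl.1 hl.2
      exact ⟨h1, by linarith⟩
  have hvan : ∀ z ∈ Set.Ioo (-r) r, z ∉ S → ∀ j : ℕ, omega g j z = 0 := by
    intro z hz hzS j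
    have hz0 : z ≠ 0 := by
      intro h
      exact hzS (by rw [hS, h]; exact Finset.mem_insert_self _ _)
    rcases lt_or_gt_of_ne hz0 with hneg | hpos
    · obtain ⟨l, hlk, hle, hlt⟩ := locate_partition hm₂ (z := z)
        (by rw [ht₂0]; exact hz.1.le) (by rw [ht₂k]; exact hneg)
      have hstrict : t₂ l < z := by
        rcases eq_or_lt_of_le hle with heq | h
        · exfalso
          have hl1 : 1 ≤ l := by
            by_contra hc
            push_neg at hc
            have hl0 : l = 0 := by omega
            rw [hl0, ht₂0] at heq
            have := hz.1
            linarith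
          refine hzS ?_
          rw [hS]
          exact Finset.mem_insert_of_mem (Finset.mem_union_right _
            (Finset.mem_image.mpr ⟨l, Finset.mem_Icc.mpr ⟨hl1, by omega⟩, heq⟩))
        · exact h
      refine omega_eq_zero_of_eq hz0 ?_ j
      have h1 : rightPoly g z = q₂ l :=
        rightPoly_eq_s15 ⟨t₂ (l+1) - z, by linarith, fun y hy =>
          hag₂ l hlk y ⟨le_trans hle hy.1, by have := hy.2; linarith⟩⟩
      have h2 : leftPoly g z = q₂ l :=
        leftPoly_eq_s15 ⟨z - t₂ l, by linarith, fun y hy =>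
          hag₂ l hlk y ⟨by have := hy.1; linarith, le_trans hy.2 hlt.le⟩⟩
      rw [h1, h2]
    · obtain ⟨l, hlk, hle, hlt⟩ := locate_partition hm₁ (z := z)
        (by rw [ht₁0]; exact hpos.le) (by rw [ht₁k]; exact hz.2)
      have hstrict : t₁ l < z := by
        rcases eq_or_lt_of_le hle with heq | h
        · exfalso
          have hl1 : 1 ≤ l := by
            by_contra hc
            push_neg at hc
            have hl0 : l = 0 := by omega
            rw [hl0, ht₁0] at heq
            linarith
          refine hzS ?_
          rw [hS]
          exact Finset.mem_insert_of_mem (Finset.mem_union_left _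
            (Finset.mem_image.mpr ⟨l, Finset.mem_Icc.mpr ⟨hl1, by omega⟩, heq⟩))
        · exact h
      refine omega_eq_zero_of_eq hz0 ?_ j
      have h1 : rightPoly g z = q₁ l :=
        rightPoly_eq_s15 ⟨t₁ (l+1) - z, by linarith, fun y hy =>
          hag₁ l hlk y ⟨le_trans hle hy.1, by have := hy.2; linarith⟩⟩
      have h2 : leftPoly g z = q₁ l :=
        leftPoly_eq_s15 ⟨z - t₁ l, by linarith, fun y hy =>
          hag₁ l hlk y ⟨by have := hy.1; linarith, le_trans hy.2 hlt.le⟩⟩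
      rw [h1, h2]
  have hdiff : ∀ j ∈ Finset.Icc 1 n, Nroot j r g - Npole j r g
      = (1/2) * ∑ z ∈ S, omega g j z * (r - |z|) ^ j := by
    intro j hj
    have hsub1 : ∀ z, (z ∈ Set.Ioo (-r) r ∧ 0 < omega g j z) → z ∈ S := by
      intro z hz
      by_contra hzS
      exact absurd (hvan z hz.1 hzS j) (ne_of_gt hz.2)
    have hsub2 : ∀ z, (z ∈ Set.Ioo (-r) r ∧ omega g j z < 0) → z ∈ S := by
      intro z hz
      by_contra hzS
      exact absurd (hvan z hz.1 hzS j) (ne_of_lt hz.2)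
    have ht1 := tsum_pred_eq_sum_filter hsub1 (fun z => |omega g j z| * (r - |z|) ^ j)
    have ht2 := tsum_pred_eq_sum_filter hsub2 (fun z => |omega g j z| * (r - |z|) ^ j)
    rw [Nroot, Npole, ht1, ht2, Finset.sum_filter, Finset.sum_filter, ← mul_sub,
      ← Finset.sum_sub_distrib]
    congr 1
    refine Finset.sum_congr rfl fun z hz => ?_
    have hzI := hSIoo z hz
    rcases lt_trichotomy (omega g j z) 0 with h | h | h
    · rw [if_neg (fun hc => absurd hc.2 (not_lt.mpr h.le)), if_pos ⟨hzI, h⟩, abs_of_neg h]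
      ring
    · rw [if_neg (by simp [h]), if_neg (by simp [h]), h]
      ring
    · rw [if_pos ⟨hzI, h⟩, if_neg (fun hc => absurd hc.2 (not_lt.mpr h.le)), abs_of_pos h]
      ring
  have hinj₁ : ∀ l ∈ Finset.Icc 1 K₁, ∀ l' ∈ Finset.Icc 1 K₁, t₁ l = t₁ l' → l = l' := by
    intro l hl l' hl' heq
    rw [Finset.mem_Icc] at hl hl'
    by_contra hne
    rcases Nat.lt_or_ge l l' with h | h
    · have := part_strict hm₁ h (by omega); linarith
    · have h' : l' < l := by omega
      have := part_strict hm₁ h' (by omega); linarith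
  have hinj₂ : ∀ l ∈ Finset.Icc 1 K₂, ∀ l' ∈ Finset.Icc 1 K₂, t₂ l = t₂ l' → l = l' := by
    intro l hl l' hl' heq
    rw [Finset.mem_Icc] at hl hl'
    by_contra hne
    rcases Nat.lt_or_ge l l' with h | h
    · have := part_strict hm₂ h (by omega); linarith
    · have h' : l' < l := by omega
      have := part_strict hm₂ h' (by omega); linarith
  have hmain : ∑ j ∈ Finset.Icc 1 n, ∑ z ∈ S, omega g j z * (r - |z|) ^ j
      = g r + g (-r) - 2 * g 0 := by
    rw [Finset.sum_comm, hS]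
    have h0notin : (0:ℝ) ∉ ((Finset.Icc 1 K₁).image t₁) ∪ ((Finset.Icc 1 K₂).image t₂) := by
      rw [Finset.mem_union]
      rintro (h | h)
      · obtain ⟨l, hl, heq⟩ := Finset.mem_image.mp h
        rw [Finset.mem_Icc] at hl
        have := (hpos₁ l hl.1 hl.2).1
        linarith
      · obtain ⟨l, hl, heq⟩ := Finset.mem_image.mp h
        rw [Finset.mem_Icc] at hl
        have := (hpos₂ l hl.1 hl.2).2
        linarith
    rw [Finset.sum_insert h0notin]
    have hdisj : Disjoint ((Finset.Icc 1 K₁).image t₁) ((Finset.Icc 1 K₂).image t₂) := by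
      rw [Finset.disjoint_left]
      intro z hz1 hz2
      obtain ⟨l, hl, rfl⟩ := Finset.mem_image.mp hz1
      rw [Finset.mem_Icc] at hl
      obtain ⟨l', hl', heq⟩ := Finset.mem_image.mp hz2
      rw [Finset.mem_Icc] at hl'
      have h1 := (hpos₁ l hl.1 hl.2).1
      have h2 := (hpos₂ l' hl'.1 hl'.2).2
      rw [heq] at h2
      linarith
    rw [Finset.sum_union hdisj, Finset.sum_image hinj₁, Finset.sum_image hinj₂]
    have hcenter : ∑ j ∈ Finset.Icc 1 n, omega g j 0 * (r - |(0:ℝ)|) ^ j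
        = (q₁ 0).eval r + (q₂ K₂).eval (-r) - 2 * g 0 := by
      rw [node_zero (n := n) g r hrp0 hlp0 (hd₁ 0 (by omega)) (hd₂ K₂ (by omega))
        (by rw [← hg0, ← hg0'])]
      rw [← hg0]
    have hposSum : ∑ l ∈ Finset.Icc 1 K₁,
        ∑ j ∈ Finset.Icc 1 n, omega g j (t₁ l) * (r - |t₁ l|) ^ j
        = g r - (q₁ 0).eval r := by
      have hterm : ∀ l ∈ Finset.Icc 1 K₁,
          ∑ j ∈ Finset.Icc 1 n, omega g j (t₁ l) * (r - |t₁ l|) ^ j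
          = (q₁ l).eval r - (q₁ (l-1)).eval r := by
        intro l hl
        rw [Finset.mem_Icc] at hl
        obtain ⟨l', rfl⟩ : ∃ l'', l = l'' + 1 := ⟨l - 1, by omega⟩
        have hlK : l' + 1 < K₁ + 1 := by omega
        rw [show l' + 1 - 1 = l' from by omega]
        exact node_pos g (hpos₁ (l'+1) (by omega) (by omega)).1 (hrp₁ (l'+1) hlK)
          (hlp₁ l' (by omega)) (hd₁ (l'+1) hlK) (hd₁ l' (by omega))
          (by rw [hc₁ (l'+1) hlK, hc₁' l' (by omega)])
      rw [Finset.sum_congr rfl hterm, ← Finset.Ico_add_one_right_eq_Icc, Finset.sum_Ico_eq_sum_range]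
      have hre : ∀ i, (q₁ (1 + i)).eval r - (q₁ (1 + i - 1)).eval r
          = (q₁ (i+1)).eval r - (q₁ i).eval r := by
        intro i
        rw [Nat.add_comm 1 i, Nat.add_sub_cancel]
      rw [Finset.sum_congr rfl (fun i _ => hre i),
        Finset.sum_range_sub (fun i => (q₁ i).eval r), hgr]
      simp [Nat.succ_sub_one]
    have hnegSum : ∑ l ∈ Finset.Icc 1 K₂,
        ∑ j ∈ Finset.Icc 1 n, omega g j (t₂ l) * (r - |t₂ l|) ^ j
        = g (-r) - (q₂ K₂).eval (-r) := by
      have hterm : ∀ l ∈ Finset.Icc 1 K₂,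
          ∑ j ∈ Finset.Icc 1 n, omega g j (t₂ l) * (r - |t₂ l|) ^ j
          = (q₂ (l-1)).eval (-r) - (q₂ l).eval (-r) := by
        intro l hl
        rw [Finset.mem_Icc] at hl
        obtain ⟨l', rfl⟩ : ∃ l'', l = l'' + 1 := ⟨l - 1, by omega⟩
        have hlK : l' + 1 < K₂ + 1 := by omega
        rw [show l' + 1 - 1 = l' from by omega]
        exact node_neg g (hpos₂ (l'+1) (by omega) (by omega)).2 (hrp₂ (l'+1) hlK)
          (hlp₂ l' (by omega)) (hd₂ (l'+1) hlK) (hd₂ l' (by omega))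
          (by rw [hc₂ (l'+1) hlK, hc₂' l' (by omega)])
      rw [Finset.sum_congr rfl hterm, ← Finset.Ico_add_one_right_eq_Icc, Finset.sum_Ico_eq_sum_range]
      have hre : ∀ i, (q₂ (1 + i - 1)).eval (-r) - (q₂ (1 + i)).eval (-r)
          = (q₂ i).eval (-r) - (q₂ (i+1)).eval (-r) := by
        intro i
        rw [Nat.add_comm 1 i, Nat.add_sub_cancel]
      rw [Finset.sum_congr rfl (fun i _ => hre i),
        Finset.sum_range_sub' (fun i => (q₂ i).eval (-r)), hgmr]
      simp [Nat.succ_sub_one]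
    rw [hcenter, hposSum, hnegSum]
    ring
  rw [Finset.sum_congr rfl hdiff, ← Finset.mul_sum, hmain]
  ring

end TropAux

/-- `n`-th second main theorem with a tropical homogeneous polynomial:
for a tropical homogeneous polynomial `P` of degree `d > 0` containing all the pure-power
monomials `α_k ⊗ x_k^{⊗ d}` with real coefficients (its remaining monomials being mixed,
i.e. with every exponent `< d`),
`T_f(r) = (1/d) (Σ_{j=1}^n N^{(j)}(r, 1₀ ⊘ P∘f) − Σ_{j=1}^n N^{(j)}(r, P∘f)) + O(1)`. -/
theorem statement15 (n m : ℕ) (hn : 1 ≤ n) (hm : 1 ≤ m)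
    (f : Fin (m + 1) → ℝ → ℝ) (hf : Trop.IsHoloCurveRep n f)
    (hred : Trop.ReducedRep f) (hnc : Trop.NonConstantCurve f)
    (d : ℕ) (hd : 0 < d)
    (T : Finset (Fin (m + 1) → ℕ)) (hT : T.Nonempty)
    (c : (Fin (m + 1) → ℕ) → ℝ)
    (hdeg : ∀ v ∈ T, ∑ k, v k = d)
    (hpure : ∀ k : Fin (m + 1), (fun j => if j = k then d else 0) ∈ T)
    (hmix : ∀ v ∈ T, (∀ k, v k < d) ∨
      ∃ k : Fin (m + 1), v = fun j => if j = k then d else 0) :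
    ∃ C : ℝ, ∀ᶠ r in Filter.atTop,
      |Trop.TCartan f r
        - (1 / (d : ℝ)) *
          ((∑ j ∈ Finset.Icc 1 n, Trop.Nroot j r (Pof f T hT c))
            - ∑ j ∈ Finset.Icc 1 n, Trop.Npole j r (Pof f T hT c))| ≤ C := by
  classical
  obtain ⟨dd, hent, hsupd⟩ := hf
  have hpieces : ∀ (k : Fin (m + 1)) (t : ℝ),
      (∃ p, Trop.IsRightPiece (f k) t p ∧ p.natDegree ≤ n) ∧
      (∃ p, Trop.IsLeftPiece (f k) t p ∧ p.natDegree ≤ n) := by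
    intro k t
    have h := TropAux.pieces_of_piecewise (hent k).1 t
    have hdk : dd k ≤ n := hsupd ▸ Finset.le_sup (Finset.mem_univ k)
    exact ⟨h.1.imp fun p hp => ⟨hp.1, hp.2.trans hdk⟩,
      h.2.imp fun p hp => ⟨hp.1, hp.2.trans hdk⟩⟩
  have hRg : ∀ t : ℝ, ∃ p, Trop.IsRightPiece (Pof f T hT c) t p ∧ p.natDegree ≤ n :=
    fun t => (TropAux.Pof_pieces f hpieces T hT c t).1
  have hLg : ∀ t : ℝ, ∃ p, Trop.IsLeftPiece (Pof f T hT c) t p ∧ p.natDegree ≤ n :=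
    fun t => (TropAux.Pof_pieces f hpieces T hT c t).2
  have hFle : ∀ (i : Fin (m + 1)) (x : ℝ), f i x ≤ Trop.Fmax f x := fun i x => by
    rw [Trop.Fmax]
    exact le_ciSup (f := fun i => f i x) (Set.Finite.bddAbove (Set.finite_range _)) i
  have hFex : ∀ x : ℝ, ∃ i, Trop.Fmax f x = f i x := by
    intro x
    obtain ⟨i, hi⟩ := Finite.exists_max fun i => f i x
    refine ⟨i, le_antisymm ?_ (hFle i x)⟩
    rw [Trop.Fmax]
    exact ciSup_le hi
  set A : ℝ := Finset.univ.inf' Finset.univ_nonempty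
    (fun k : Fin (m + 1) => c (fun j => if j = k then d else 0)) with hA
  set B : ℝ := T.sup' hT c with hB
  have hub : ∀ x : ℝ, Pof f T hT c x ≤ (d : ℝ) * Trop.Fmax f x + B := by
    intro x
    rw [Pof]
    refine Finset.sup'_le _ _ fun v hv => ?_
    have h1 : ∑ k, (v k : ℝ) * f k x ≤ ∑ k, (v k : ℝ) * Trop.Fmax f x :=
      Finset.sum_le_sum fun k _ => mul_le_mul_of_nonneg_left (hFle k x) (Nat.cast_nonneg _)
    have h2 : ∑ k, (v k : ℝ) * Trop.Fmax f x = (d : ℝ) * Trop.Fmax f x := by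
      rw [← Finset.sum_mul]
      congr 1
      rw [← Nat.cast_sum, hdeg v hv]
    have h3 : c v ≤ B := Finset.le_sup' c hv
    linarith
  have hlb : ∀ x : ℝ, (d : ℝ) * Trop.Fmax f x + A ≤ Pof f T hT c x := by
    intro x
    obtain ⟨i, hi⟩ := hFex x
    rw [Pof, hi]
    have h1 : A ≤ c (fun j => if j = i then d else 0) :=
      Finset.inf'_le _ (Finset.mem_univ i)
    have h2 := Finset.le_sup' (fun v => c v + ∑ k, (v k : ℝ) * f k x) (hpure i)
    have h3 : ∑ k, (((if k = i then d else 0 : ℕ)) : ℝ) * f k x = (d : ℝ) * f i x := by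
      have hterm : ∀ k : Fin (m + 1),
          (((if k = i then d else 0 : ℕ)) : ℝ) * f k x
            = if k = i then (d : ℝ) * f k x else 0 := by
        intro k
        split_ifs <;> simp
      rw [Finset.sum_congr rfl fun k _ => hterm k,
        Finset.sum_ite_eq' Finset.univ i fun k => (d : ℝ) * f k x]
      simp
    rw [h3] at h2
    linarith
  have hd0 : (0 : ℝ) < d := Nat.cast_pos.mpr hd
  have hd1 : (1 : ℝ) ≤ d := Nat.one_le_cast.mpr hd
  refine ⟨|A| + |B|, ?_⟩
  filter_upwards [Filter.eventually_gt_atTop (0 : ℝ)] with r hr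
  have hj := TropAux.jensen hRg hLg hr
  have hsum : (∑ j ∈ Finset.Icc 1 n, Trop.Nroot j r (Pof f T hT c))
      - ∑ j ∈ Finset.Icc 1 n, Trop.Npole j r (Pof f T hT c)
      = (Pof f T hT c r + Pof f T hT c (-r)) / 2 - Pof f T hT c 0 := by
    rw [← Finset.sum_sub_distrib]
    exact hj
  rw [hsum, Trop.TCartan]
  set X : ℝ := (Trop.Fmax f r + Trop.Fmax f (-r)) / 2 - Trop.Fmax f 0
    - 1 / (d : ℝ) * ((Pof f T hT c r + Pof f T hT c (-r)) / 2 - Pof f T hT c 0) with hX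
  show |X| ≤ |A| + |B|
  have hkey : X * d = (Pof f T hT c 0 - (d : ℝ) * Trop.Fmax f 0)
      - ((Pof f T hT c r - (d : ℝ) * Trop.Fmax f r)
        + (Pof f T hT c (-r) - (d : ℝ) * Trop.Fmax f (-r))) / 2 := by
    rw [hX]
    field_simp
    ring
  have e1l := hlb r
  have e1u := hub r
  have e2l := hlb (-r)
  have e2u := hub (-r)
  have e3l := hlb 0
  have e3u := hub 0
  have hmul : (|A| + |B|) * 1 ≤ (|A| + |B|) * d :=
    mul_le_mul_of_nonneg_left hd1 (by positivity)
  have h2 : |X * d| ≤ (|A| + |B|) * d := by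
    rw [hkey, abs_le]
    constructor <;>
      linarith [neg_abs_le A, le_abs_self A, neg_abs_le B, le_abs_self B]
  rw [abs_mul, abs_of_pos hd0] at h2
  have h3 : |X| * d / d ≤ (|A| + |B|) * d / d := (div_le_div_iff_of_pos_right hd0).mpr h2
  calc |X| = |X| * d / d := by field_simp
    _ ≤ (|A| + |B|) * d / d := h3
    _ = |A| + |B| := by field_simp
end
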